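/- arXiv:1702.01054 — 6 statements merged into one kernel-verified Lean document; each statement's English description precedes it below -/
import Mathlib

section
/- Let Ω ⊆ ℝⁿ be a nonempty bounded open set, let x₀ ∈ ℝⁿ∖{0}, and let ν be a symmetric Lévy measure on ℝⁿ with ν({x₀}) > 0. Then there exists a constant C > 0, independent of u, such that ‖u‖²_{L²(ℝⁿ)} ≤ C ⟨u,u⟩_ν for every u ∈ H_ν^Ω(ℝⁿ). Moreover, for fixed Ω and ε > 0 the constant C can be chosen uniformly over all atoms x₀ with |x₀| > ε. -/
open MeasureTheory Filter Set Topology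
open scoped ENNReal Topology Pointwise Classical

noncomputable section

abbrev Eucl (n : ℕ) : Type := EuclideanSpace ℝ (Fin n)

/-- A symmetric Lévy measure on ℝⁿ: ν({0}) = 0, ν(−A) = ν(A) for Borel A, and
∫ min(1,|y|²) dν < ∞. -/
def IsSymmLevy {n : ℕ} (ν : Measure (Eucl n)) : Prop :=
  ν {0} = 0 ∧ (∀ A : Set (Eucl n), MeasurableSet A → ν (-A) = ν A) ∧
    (∫⁻ y, ENNReal.ofReal (min 1 (‖y‖ ^ 2)) ∂ν) < ⊤

/-- The truncated nonlocal operator: ∫_{|y| ≥ ε} (u(x) − u(x+y)) dν(y). -/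
def truncL {n : ℕ} (ν : Measure (Eucl n)) (u : Eucl n → ℝ) (x : Eucl n) (ε : ℝ) : ℝ :=
  ∫ y in {y : Eucl n | ε ≤ ‖y‖}, (u x - u (x + y)) ∂ν

/-- `Lu(x)` is well defined with value `l`: the integrands are ν-integrable away from the
origin, and the principal value limit exists and equals `l`. -/
def HasLAt {n : ℕ} (ν : Measure (Eucl n)) (u : Eucl n → ℝ) (x : Eucl n) (l : ℝ) : Prop :=
  (∀ ε : ℝ, 0 < ε → IntegrableOn (fun y => u x - u (x + y)) {y : Eucl n | ε ≤ ‖y‖} ν) ∧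
  Tendsto (truncL ν u x) (𝓝[>] (0:ℝ)) (𝓝 l)

/-- Squared norm of the generalized Sobolev space V_ν^D(ℝⁿ). -/
def sobSq {n : ℕ} (ν : Measure (Eucl n)) (D : Set (Eucl n)) (u : Eucl n → ℝ) : ℝ≥0∞ :=
  (∫⁻ x in D, ENNReal.ofReal (u x ^ 2)) +
    (1/2) * ∫⁻ y in D, ∫⁻ z, ENNReal.ofReal ((u y - u (y + z)) ^ 2) ∂ν

/-- Membership in V_ν^D(ℝⁿ). -/
def MemV {n : ℕ} (ν : Measure (Eucl n)) (D : Set (Eucl n)) (u : Eucl n → ℝ) : Prop :=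
  Measurable u ∧ sobSq ν D u < ⊤

/-- Membership in H_ν^D(ℝⁿ): members of V_ν^D vanishing a.e. outside D. -/
def MemH {n : ℕ} (ν : Measure (Eucl n)) (D : Set (Eucl n)) (u : Eucl n → ℝ) : Prop :=
  MemV ν D u ∧ ∀ᵐ x ∂(volume : Measure (Eucl n)), x ∉ D → u x = 0

/-- The quadratic form ⟨u,u⟩_ν (with values in [0,∞]). -/
def formQ {n : ℕ} (ν : Measure (Eucl n)) (u : Eucl n → ℝ) : ℝ≥0∞ :=
  (1/2) * ∫⁻ y, ∫⁻ z, ENNReal.ofReal ((u y - u (y + z)) ^ 2) ∂ν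

/-- The bilinear form ⟨u,v⟩_ν. -/
def formB {n : ℕ} (ν : Measure (Eucl n)) (u v : Eucl n → ℝ) : ℝ :=
  (1/2) * ∫ y, (∫ z, (u y - u (y + z)) * (v y - v (y + z)) ∂ν)

/-- Weak solution of Lu = f in Ω, u = g on ℝⁿ∖Ω. -/
def IsWeakSol {n : ℕ} (ν : Measure (Eucl n)) (Ω : Set (Eucl n))
    (f g u : Eucl n → ℝ) : Prop :=
  MemV ν Ω u ∧ (∀ᵐ x ∂(volume : Measure (Eucl n)), x ∉ Ω → u x = g x) ∧
  ∀ φ : Eucl n → ℝ, MemH ν Ω φ → formB ν u φ = ∫ x in Ω, f x * φ x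

end

lemma key_poincare {n : ℕ} (Ω : Set (Eucl n)) (R : ℝ) (hΩR : Ω ⊆ Metric.ball 0 R)
    (N : ℕ) (y₀ : Eucl n) (hN : 2 * R < N * ‖y₀‖)
    (u : Eucl n → ℝ) (hu : Measurable u)
    (hu0 : ∀ᵐ x ∂(volume : Measure (Eucl n)), x ∉ Ω → u x = 0) :
    (∫⁻ x, ENNReal.ofReal (u x ^ 2)) ≤
      (N : ℝ≥0∞) ^ 2 * ∫⁻ y, ENNReal.ofReal ((u y - u (y + y₀)) ^ 2) := by
  have hae : ∀ᵐ x ∂(volume : Measure (Eucl n)),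
      ∀ k : ℕ, (x + (k : ℝ) • y₀) ∉ Ω → u (x + (k : ℝ) • y₀) = 0 := by
    rw [ae_all_iff]
    intro k
    exact (measurePreserving_add_right (volume : Measure (Eucl n))
      ((k : ℝ) • y₀)).quasiMeasurePreserving.ae hu0
  have hmain : ∀ᵐ x ∂(volume : Measure (Eucl n)),
      ENNReal.ofReal (u x ^ 2) ≤
        (N : ℝ≥0∞) * ∑ k ∈ Finset.range N,
          ENNReal.ofReal ((u (x + (k : ℝ) • y₀) - u ((x + (k : ℝ) • y₀) + y₀)) ^ 2) := by
    filter_upwards [hae] with x hx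
    by_cases hxΩ : x ∈ Ω
    · have hNy : x + (N : ℝ) • y₀ ∉ Ω := by
        intro hmem
        have h1 : ‖x‖ < R := by simpa using hΩR hxΩ
        have h2 : ‖x + (N : ℝ) • y₀‖ < R := by simpa using hΩR hmem
        have h3 : (N : ℝ) * ‖y₀‖ ≤ ‖x + (N : ℝ) • y₀‖ + ‖x‖ := by
          calc (N : ℝ) * ‖y₀‖ = ‖(N : ℝ) • y₀‖ := by
                rw [norm_smul, Real.norm_eq_abs, abs_of_nonneg (Nat.cast_nonneg N)]
            _ = ‖(x + (N : ℝ) • y₀) - x‖ := by rw [add_sub_cancel_left]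
            _ ≤ _ := norm_sub_le _ _
        linarith
      have huN : u (x + (N : ℝ) • y₀) = 0 := hx N hNy
      have htel : u x = ∑ k ∈ Finset.range N,
          (u (x + (k : ℝ) • y₀) - u ((x + (k : ℝ) • y₀) + y₀)) := by
        have h := Finset.sum_range_sub' (fun k : ℕ => u (x + (k : ℝ) • y₀)) N
        have heq : ∀ k : ℕ, x + ((k : ℝ) + 1) • y₀ = (x + (k : ℝ) • y₀) + y₀ := by
          intro k; rw [add_smul, one_smul, add_assoc]
        simp only [Nat.cast_add, Nat.cast_one] at h
        rw [Finset.sum_congr rfl (fun k _ => by rw [← heq k]), h, huN, sub_zero]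
        simp
      have hsq : u x ^ 2 ≤ (N : ℝ) * ∑ k ∈ Finset.range N,
          (u (x + (k : ℝ) • y₀) - u ((x + (k : ℝ) • y₀) + y₀)) ^ 2 := by
        rw [htel]
        have := sq_sum_le_card_mul_sum_sq (s := Finset.range N)
          (f := fun k : ℕ => u (x + (k : ℝ) • y₀) - u ((x + (k : ℝ) • y₀) + y₀))
        simpa using this
      calc ENNReal.ofReal (u x ^ 2)
          ≤ ENNReal.ofReal ((N : ℝ) * ∑ k ∈ Finset.range N,
              (u (x + (k : ℝ) • y₀) - u ((x + (k : ℝ) • y₀) + y₀)) ^ 2) :=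
            ENNReal.ofReal_le_ofReal hsq
        _ = (N : ℝ≥0∞) * ∑ k ∈ Finset.range N,
              ENNReal.ofReal ((u (x + (k : ℝ) • y₀) - u ((x + (k : ℝ) • y₀) + y₀)) ^ 2) := by
            rw [ENNReal.ofReal_mul (Nat.cast_nonneg N), ENNReal.ofReal_natCast,
              ENNReal.ofReal_sum_of_nonneg (fun k _ => sq_nonneg _)]
    · have : u x = 0 := by
        have h0 := hx 0
        simp only [Nat.cast_zero, zero_smul, add_zero] at h0
        exact h0 hxΩ
      simp [this]
  have hmeas : ∀ c : Eucl n, Measurable fun x : Eucl n =>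
      ENNReal.ofReal ((u (x + c) - u ((x + c) + y₀)) ^ 2) := by
    intro c
    exact ENNReal.measurable_ofReal.comp
      (((hu.comp (measurable_add_const c)).sub
        (hu.comp ((measurable_add_const c).add_const y₀))).pow_const 2)
  calc (∫⁻ x, ENNReal.ofReal (u x ^ 2))
      ≤ ∫⁻ x, (N : ℝ≥0∞) * ∑ k ∈ Finset.range N,
          ENNReal.ofReal ((u (x + (k : ℝ) • y₀) - u ((x + (k : ℝ) • y₀) + y₀)) ^ 2) :=
        lintegral_mono_ae hmain
    _ = (N : ℝ≥0∞) * ∑ k ∈ Finset.range N,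
          ∫⁻ x, ENNReal.ofReal ((u (x + (k : ℝ) • y₀) - u ((x + (k : ℝ) • y₀) + y₀)) ^ 2) := by
        rw [lintegral_const_mul _ (Finset.measurable_sum _ (fun k _ => hmeas _)),
          lintegral_finset_sum _ (fun k _ => hmeas _)]
    _ = (N : ℝ≥0∞) * ∑ k ∈ Finset.range N,
          ∫⁻ y, ENNReal.ofReal ((u y - u (y + y₀)) ^ 2) := by
        congr 1
        exact Finset.sum_congr rfl fun k _ =>
          lintegral_add_right_eq_self (fun y => ENNReal.ofReal ((u y - u (y + y₀)) ^ 2))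
            ((k : ℝ) • y₀)
    _ = (N : ℝ≥0∞) ^ 2 * ∫⁻ y, ENNReal.ofReal ((u y - u (y + y₀)) ^ 2) := by
        rw [Finset.sum_const, Finset.card_range, nsmul_eq_mul, ← mul_assoc, sq]


theorem dirichlet_stmt6 {n : ℕ} (ν : Measure (Eucl n)) (hν : IsSymmLevy ν)
    (Ω : Set (Eucl n)) (hΩo : IsOpen Ω) (hΩne : Ω.Nonempty)
    (hΩb : Bornology.IsBounded Ω)
    (x₀ : Eucl n) (hx₀ : x₀ ≠ 0) (hatom : 0 < ν {x₀}) :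
    (∃ C : ℝ, 0 < C ∧ ∀ u : Eucl n → ℝ, MemH ν Ω u →
        (∫⁻ x, ENNReal.ofReal (u x ^ 2)) ≤ ENNReal.ofReal C * formQ ν u) ∧
    (∀ ε : ℝ, 0 < ε → ∃ C : ℝ, 0 < C ∧ ∀ y₀ : Eucl n, ε < ‖y₀‖ →
        ∀ u : Eucl n → ℝ, Measurable u →
        (∀ᵐ x ∂(volume : Measure (Eucl n)), x ∉ Ω → u x = 0) →
        (∫⁻ x, ENNReal.ofReal (u x ^ 2)) ≤
          ENNReal.ofReal C *
            ((1/2) * ∫⁻ y, ENNReal.ofReal ((u y - u (y + y₀)) ^ 2))) := by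
  
  obtain ⟨R₀, hR₀⟩ := hΩb.subset_ball 0
  set R : ℝ := max R₀ 1 with hRdef
  have hΩR : Ω ⊆ Metric.ball 0 R := hR₀.trans (Metric.ball_subset_ball (le_max_left _ _))
  have hR : (0:ℝ) < R := lt_of_lt_of_le one_pos (le_max_right _ _)
  have hsecond : ∀ ε : ℝ, 0 < ε → ∃ C : ℝ, 0 < C ∧ ∀ y₀ : Eucl n, ε < ‖y₀‖ →
      ∀ u : Eucl n → ℝ, Measurable u →
      (∀ᵐ x ∂(volume : Measure (Eucl n)), x ∉ Ω → u x = 0) →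
      (∫⁻ x, ENNReal.ofReal (u x ^ 2)) ≤
        ENNReal.ofReal C *
          ((1/2) * ∫⁻ y, ENNReal.ofReal ((u y - u (y + y₀)) ^ 2)) := by
    intro ε hε
    set N : ℕ := ⌊2 * R / ε⌋₊ + 1 with hNdef
    have hNpos : 0 < N := Nat.succ_pos _
    refine ⟨2 * (N:ℝ)^2, by positivity, ?_⟩
    intro y₀ hy₀ u hu hu0
    have hNε : 2 * R < N * ‖y₀‖ := by
      have h1 : 2 * R / ε < (N : ℝ) := by
        have := Nat.lt_floor_add_one (2 * R / ε)
        simpa [hNdef] using this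
      have h2 : 2 * R < (N:ℝ) * ε := by
        rw [div_lt_iff₀ hε] at h1; linarith
      have h3 : (N:ℝ) * ε ≤ (N:ℝ) * ‖y₀‖ :=
        mul_le_mul_of_nonneg_left (le_of_lt hy₀) (Nat.cast_nonneg N)
      linarith
    have hkey := key_poincare Ω R hΩR N y₀ hNε u hu hu0
    refine hkey.trans (le_of_eq ?_)
    have h2 : ENNReal.ofReal (2*(N:ℝ)^2) = 2 * (N:ℝ≥0∞)^2 := by
      rw [ENNReal.ofReal_mul zero_le_two, ENNReal.ofReal_pow (Nat.cast_nonneg N),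
        ENNReal.ofReal_natCast]
      norm_num
    set I := ∫⁻ y, ENNReal.ofReal ((u y - u (y + y₀)) ^ 2) with hIdef
    calc (N:ℝ≥0∞)^2 * I = (2 * (1/2 : ℝ≥0∞)) * ((N:ℝ≥0∞)^2 * I) := by
          rw [one_div, ENNReal.mul_inv_cancel two_ne_zero ENNReal.ofNat_ne_top, one_mul]
      _ = ENNReal.ofReal (2*(N:ℝ)^2) * ((1/2) * I) := by rw [h2]; ring
  refine ⟨?_, hsecond⟩
  set m : ℝ≥0∞ := min (ν {x₀}) 1 with hm
  have hm0 : 0 < m := lt_min hatom zero_lt_one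
  have hmtop : m ≠ ⊤ := ne_top_of_le_ne_top ENNReal.one_ne_top (min_le_right _ _)
  have hmt : 0 < m.toReal := ENNReal.toReal_pos hm0.ne' hmtop
  have hx0n : (0:ℝ) < ‖x₀‖/2 := by
    have := norm_pos_iff.mpr hx₀
    linarith
  obtain ⟨C₀, hC₀, hC₀u⟩ := hsecond (‖x₀‖/2) hx0n
  refine ⟨C₀ / m.toReal, by positivity, ?_⟩
  intro u hu
  obtain ⟨⟨humeas, -⟩, hu0⟩ := hu
  have hI := hC₀u x₀ (by linarith [norm_pos_iff.mpr hx₀]) u humeas hu0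
  have hImeas : Measurable fun y : Eucl n => ENNReal.ofReal ((u y - u (y + x₀))^2) :=
    ENNReal.measurable_ofReal.comp
      ((humeas.sub (humeas.comp (measurable_add_const x₀))).pow_const 2)
  have hQ : m * ∫⁻ y, ENNReal.ofReal ((u y - u (y + x₀))^2) ≤
      ∫⁻ y, ∫⁻ z, ENNReal.ofReal ((u y - u (y + z))^2) ∂ν := by
    rw [← lintegral_const_mul m hImeas]
    apply lintegral_mono
    intro y
    calc m * ENNReal.ofReal ((u y - u (y + x₀))^2)
        ≤ ν {x₀} * ENNReal.ofReal ((u y - u (y + x₀))^2) :=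
          mul_le_mul_left (min_le_left _ _) _
      _ = ENNReal.ofReal ((u y - u (y + x₀))^2) * ν {x₀} := mul_comm _ _
      _ = ∫⁻ z in {x₀}, ENNReal.ofReal ((u y - u (y + z))^2) ∂ν :=
          (lintegral_singleton (fun z => ENNReal.ofReal ((u y - u (y + z))^2)) x₀).symm
      _ ≤ ∫⁻ z, ENNReal.ofReal ((u y - u (y + z))^2) ∂ν :=
          lintegral_mono' Measure.restrict_le_self le_rfl
  refine hI.trans ?_
  have hof : ENNReal.ofReal (C₀ / m.toReal) * m = ENNReal.ofReal C₀ := by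
    rw [← ENNReal.ofReal_toReal hmtop, ENNReal.toReal_ofReal hmt.le,
      ← ENNReal.ofReal_mul (by positivity), div_mul_cancel₀ _ hmt.ne']
  set I := ∫⁻ y, ENNReal.ofReal ((u y - u (y + x₀))^2) with hIdef
  set J := ∫⁻ y, ∫⁻ z, ENNReal.ofReal ((u y - u (y + z))^2) ∂ν with hJdef
  have hform : formQ ν u = (1/2) * J := rfl
  calc ENNReal.ofReal C₀ * ((1/2) * I)
      = ENNReal.ofReal (C₀ / m.toReal) * (1/2) * (m * I) := by rw [← hof]; ring
    _ ≤ ENNReal.ofReal (C₀ / m.toReal) * (1/2) * J :=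
        mul_le_mul_right hQ _
    _ = ENNReal.ofReal (C₀ / m.toReal) * formQ ν u := by rw [hform, mul_assoc]
end

section
/- (Poincaré inequality for symmetric Lévy measures) Let Ω ⊆ ℝⁿ be a nonempty bounded open set and let ν be a symmetric Lévy measure on ℝⁿ with ν(ℝⁿ∖{0}) > 0. Then there exists a constant C = C(ν, Ω) > 0 such that ‖u‖²_{L²(Ω)} ≤ C ⟨u,u⟩_ν for every u ∈ H_ν^Ω(ℝⁿ). -/
open MeasureTheory Filter Set Topology
open scoped ENNReal Topology Pointwise Classical

/-!
Pick `δ > 0` such that the tail `S = {‖z‖ ≥ δ}` has `0 < ν S < ∞`, and `k ∈ ℕ` with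
`diam Ω < k δ`. For `z ∈ S` and `x ∈ Ω` the point `x + k z` lies outside `Ω`, where `u`
vanishes, so telescoping along `x, x + z, …, x + k z` and Cauchy–Schwarz give
`u(x)² ≤ k ∑_{j<k} (u(x + j z) - u(x + (j+1) z))²`. Integrating in `x` and using
translation invariance of Lebesgue measure, `‖u‖²_{L²(Ω)} ≤ k² ∫ (u(x) - u(x+z))² dx`;
averaging over `z ∈ S` yields the inequality with `C = 2k² / ν S`.
-/

section Tail

variable {E : Type*} [NormedAddCommGroup E] [MeasurableSpace E]

lemma exists_pos_measure_norm_ge {ν : Measure E} (hν : 0 < ν {0}ᶜ) :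
    ∃ δ : ℝ, 0 < δ ∧ 0 < ν {z | δ ≤ ‖z‖} := by
  by_contra! h
  have hcover : ({0}ᶜ : Set E) ⊆ ⋃ m : ℕ, {z | 1 / ((m : ℝ) + 1) ≤ ‖z‖} := by
    intro z hz
    obtain ⟨m, hm⟩ := exists_nat_one_div_lt (norm_pos_iff.mpr hz)
    exact mem_iUnion.mpr ⟨m, hm.le⟩
  exact hν.ne' (measure_mono_null hcover
    (measure_iUnion_null fun m => nonpos_iff_eq_zero.mp (h _ (by positivity))))

lemma measure_norm_ge_lt_top [OpensMeasurableSpace E] {ν : Measure E}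
    (hν : ∫⁻ y, ENNReal.ofReal (min 1 (‖y‖ ^ 2)) ∂ν < ⊤) {δ : ℝ} (hδ : 0 < δ) :
    ν {z | δ ≤ ‖z‖} < ⊤ := by
  have hc : ENNReal.ofReal (min 1 (δ ^ 2)) ≠ 0 := by positivity
  have hsub : {z : E | δ ≤ ‖z‖} ⊆
      {z | ENNReal.ofReal (min 1 (δ ^ 2)) ≤ ENNReal.ofReal (min 1 (‖z‖ ^ 2))} := by
    intro z hz
    exact ENNReal.ofReal_le_ofReal (min_le_min le_rfl (pow_le_pow_left₀ hδ.le hz 2))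
  have hmarkov := mul_meas_ge_le_lintegral₀
    (by fun_prop : AEMeasurable (fun y : E => ENNReal.ofReal (min 1 (‖y‖ ^ 2))) ν)
    (ENNReal.ofReal (min 1 (δ ^ 2)))
  exact (measure_mono hsub).trans_lt
    (ENNReal.lt_top_of_mul_ne_top_right ((hmarkov.trans_lt hν).ne) hc)

end Tail

lemma add_nsmul_notMem_of_diam_lt {E : Type*} [NormedAddCommGroup E] [NormedSpace ℝ E]
    {Ω : Set E} (hΩ : Bornology.IsBounded Ω) {x z : E} {k : ℕ} (hx : x ∈ Ω)
    (hk : Metric.diam Ω < k * ‖z‖) : x + k • z ∉ Ω := fun h => by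
  have hdist := Metric.dist_le_diam_of_mem hΩ hx h
  rw [dist_self_add_right, RCLike.norm_nsmul ℝ, nsmul_eq_mul] at hdist
  linarith

lemma sq_le_mul_sum_sq_sub_of_eq_zero (f : ℕ → ℝ) {k : ℕ} (hk : f k = 0) :
    f 0 ^ 2 ≤ k * ∑ j ∈ Finset.range k, (f j - f (j + 1)) ^ 2 := by
  have htele : f 0 = ∑ j ∈ Finset.range k, (f j - f (j + 1)) := by
    rw [Finset.sum_range_sub', hk, sub_zero]
  rw [htele]
  simpa using sq_sum_le_card_mul_sum_sq (s := Finset.range k) (f := fun j => f j - f (j + 1))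

section Translation

variable {G : Type*} [AddGroup G] [MeasurableSpace G] [MeasurableAdd G] (μ : Measure G)
  [μ.IsAddRightInvariant] {u : G → ℝ} {Ω : Set G}

lemma setLIntegral_sq_le_of_add_nsmul_notMem (hu : Measurable u) (hΩ : MeasurableSet Ω)
    (hu0 : ∀ᵐ x ∂μ, x ∉ Ω → u x = 0) {z : G} {k : ℕ}
    (hk : ∀ x ∈ Ω, x + k • z ∉ Ω) :
    ∫⁻ x in Ω, ENNReal.ofReal (u x ^ 2) ∂μ ≤
      k ^ 2 * ∫⁻ x, ENNReal.ofReal ((u x - u (x + z)) ^ 2) ∂μ := by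
  set d : ℕ → G → ℝ≥0∞ := fun j x =>
    ENNReal.ofReal ((u (x + j • z) - u (x + (j + 1) • z)) ^ 2)
  have hd_meas : ∀ j, Measurable (d j) := fun j => by fun_prop
  have hd_int (j : ℕ) :
      ∫⁻ x, d j x ∂μ = ∫⁻ x, ENNReal.ofReal ((u x - u (x + z)) ^ 2) ∂μ := by
    simp_rw [d, succ_nsmul, ← add_assoc]
    exact lintegral_add_right_eq_self (fun x => ENNReal.ofReal ((u x - u (x + z)) ^ 2)) (j • z)
  have hae : ∀ᵐ x ∂μ, x + k • z ∉ Ω → u (x + k • z) = 0 :=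
    (measurePreserving_add_right μ (k • z)).quasiMeasurePreserving.ae hu0
  have hpointwise : ∀ᵐ x ∂μ.restrict Ω,
      ENNReal.ofReal (u x ^ 2) ≤ k * ∑ j ∈ Finset.range k, d j x := by
    refine (ae_restrict_iff' hΩ).mpr (hae.mono fun x hx hxΩ => ?_)
    have hbound := sq_le_mul_sum_sq_sub_of_eq_zero (fun j => u (x + j • z)) (hx (hk x hxΩ))
    simp only [zero_smul, add_zero] at hbound
    calc ENNReal.ofReal (u x ^ 2)
        ≤ ENNReal.ofReal
            (k * ∑ j ∈ Finset.range k, (u (x + j • z) - u (x + (j + 1) • z)) ^ 2) :=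
          ENNReal.ofReal_le_ofReal hbound
      _ = k * ∑ j ∈ Finset.range k, d j x := by
          rw [ENNReal.ofReal_mul (Nat.cast_nonneg k), ENNReal.ofReal_natCast,
            ENNReal.ofReal_sum_of_nonneg fun j _ => sq_nonneg _]
  calc ∫⁻ x in Ω, ENNReal.ofReal (u x ^ 2) ∂μ
      ≤ ∫⁻ x in Ω, k * ∑ j ∈ Finset.range k, d j x ∂μ := lintegral_mono_ae hpointwise
    _ ≤ ∫⁻ x, k * ∑ j ∈ Finset.range k, d j x ∂μ := setLIntegral_le_lintegral _ _
    _ = k * ∑ j ∈ Finset.range k, ∫⁻ x, d j x ∂μ := by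
        rw [lintegral_const_mul' _ _ (ENNReal.natCast_ne_top k),
          lintegral_finsetSum _ fun j _ => hd_meas j]
    _ = k ^ 2 * ∫⁻ x, ENNReal.ofReal ((u x - u (x + z)) ^ 2) ∂μ := by
        simp_rw [hd_int, Finset.sum_const, Finset.card_range, nsmul_eq_mul]
        ring

lemma measure_mul_setLIntegral_sq_le [MeasurableAdd₂ G] [SFinite μ] (ν : Measure G)
    {S : Set G} (hS : MeasurableSet S) (hνS : ν S ≠ ⊤) (hu : Measurable u)
    (hΩ : MeasurableSet Ω) (hu0 : ∀ᵐ x ∂μ, x ∉ Ω → u x = 0) {k : ℕ}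
    (hk : ∀ z ∈ S, ∀ x ∈ Ω, x + k • z ∉ Ω) :
    ν S * ∫⁻ x in Ω, ENNReal.ofReal (u x ^ 2) ∂μ ≤
      k ^ 2 * ∫⁻ x, ∫⁻ z, ENNReal.ofReal ((u x - u (x + z)) ^ 2) ∂ν ∂μ := by
  have : IsFiniteMeasure (ν.restrict S) := isFiniteMeasure_restrict.mpr hνS
  have hmeas : Measurable fun p : G × G => ENNReal.ofReal ((u p.2 - u (p.2 + p.1)) ^ 2) := by
    fun_prop
  calc ν S * ∫⁻ x in Ω, ENNReal.ofReal (u x ^ 2) ∂μ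
      = ∫⁻ _ in S, ∫⁻ x in Ω, ENNReal.ofReal (u x ^ 2) ∂μ ∂ν := by
        rw [setLIntegral_const, mul_comm]
    _ ≤ ∫⁻ z in S, k ^ 2 * ∫⁻ x, ENNReal.ofReal ((u x - u (x + z)) ^ 2) ∂μ ∂ν :=
        setLIntegral_mono' hS fun z hz =>
          setLIntegral_sq_le_of_add_nsmul_notMem μ hu hΩ hu0 (hk z hz)
    _ = k ^ 2 * ∫⁻ x, ∫⁻ z in S, ENNReal.ofReal ((u x - u (x + z)) ^ 2) ∂ν ∂μ := by
        rw [lintegral_const_mul' _ _ (by simp), lintegral_lintegral_swap hmeas.aemeasurable]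
    _ ≤ k ^ 2 * ∫⁻ x, ∫⁻ z, ENNReal.ofReal ((u x - u (x + z)) ^ 2) ∂ν ∂μ := by
        gcongr
        exact Measure.restrict_le_self

end Translation

theorem dirichlet_stmt7_general {n : ℕ} (ν : Measure (Eucl n)) (hν : IsSymmLevy ν)
    (hν0 : 0 < ν ({0}ᶜ : Set (Eucl n)))
    (Ω : Set (Eucl n)) (hΩo : IsOpen Ω)
    (hΩb : Bornology.IsBounded Ω) :
    ∃ C : ℝ, 0 < C ∧ ∀ u : Eucl n → ℝ, MemH ν Ω u →
      (∫⁻ x in Ω, ENNReal.ofReal (u x ^ 2)) ≤ ENNReal.ofReal C * formQ ν u := by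
  obtain ⟨δ, hδ, hS⟩ := exists_pos_measure_norm_ge hν0
  set S := {z : Eucl n | δ ≤ ‖z‖}
  have hSfin : ν S < ⊤ := measure_norm_ge_lt_top hν.2.2 hδ
  obtain ⟨k, hk⟩ := exists_nat_gt (Metric.diam Ω / δ)
  have hkδ : Metric.diam Ω < k * δ := (div_lt_iff₀ hδ).mp hk
  have hk0 : 0 < k :=
    Nat.cast_pos.mp ((div_nonneg Metric.diam_nonneg hδ.le).trans_lt hk)
  set c : ℝ≥0∞ := (ν S)⁻¹ * (2 * k ^ 2)
  have hc : c ≠ ⊤ := ENNReal.mul_ne_top (ENNReal.inv_ne_top.mpr hS.ne') (by finiteness)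
  refine ⟨c.toReal, ENNReal.toReal_pos (by simp [c, hSfin.ne, hk0.ne']) hc, fun u hu => ?_⟩
  have key := measure_mul_setLIntegral_sq_le volume ν
    (isClosed_le continuous_const continuous_norm).measurableSet hSfin.ne hu.1.1
    hΩo.measurableSet hu.2 fun z hz x hx =>
      add_nsmul_notMem_of_diam_lt hΩb hx (hkδ.trans_le (by gcongr; exact hz))
  have hform : ∫⁻ x, ∫⁻ z, ENNReal.ofReal ((u x - u (x + z)) ^ 2) ∂ν = 2 * formQ ν u := by
    rw [formQ, ← mul_assoc, one_div, ENNReal.mul_inv_cancel two_ne_zero ENNReal.ofNat_ne_top,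
      one_mul]
  rw [hform] at key
  rw [ENNReal.ofReal_toReal hc]
  set I := ∫⁻ x in Ω, ENNReal.ofReal (u x ^ 2)
  calc I = (ν S)⁻¹ * (ν S * I) := by
        rw [← mul_assoc, ENNReal.inv_mul_cancel hS.ne' hSfin.ne, one_mul]
    _ ≤ (ν S)⁻¹ * (k ^ 2 * (2 * formQ ν u)) := by gcongr
    _ = c * formQ ν u := by ring

theorem dirichlet_stmt7 {n : ℕ} (ν : Measure (Eucl n)) (hν : IsSymmLevy ν)
    (hν0 : 0 < ν ({0}ᶜ : Set (Eucl n)))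
    (Ω : Set (Eucl n)) (hΩo : IsOpen Ω) (hΩne : Ω.Nonempty)
    (hΩb : Bornology.IsBounded Ω) :
    ∃ C : ℝ, 0 < C ∧ ∀ u : Eucl n → ℝ, MemH ν Ω u →
      (∫⁻ x in Ω, ENNReal.ofReal (u x ^ 2)) ≤ ENNReal.ofReal C * formQ ν u :=
  dirichlet_stmt7_general ν hν hν0 Ω hΩo hΩb
end

section
/- Let ν be a symmetric Lévy measure on ℝⁿ, Ω ⊆ ℝⁿ a nonempty bounded open set, f ∈ L²(Ω), and g a function on ℝⁿ∖Ω. A function u ∈ V_ν^Ω(ℝⁿ) is a weak solution of Lu = f in Ω, u = g on ℝⁿ∖Ω if and only if u = g a.e. on ℝⁿ∖Ω and u minimizes the energy functional E(v) = (1/4)∫∫_{(ℝⁿ×ℝⁿ)∖((ℝⁿ∖Ω)×(ℝⁿ∖Ω))} (v(x) − v(y))² dν_x(y) dx − ∫_Ω f v dx among all v ∈ V_ν^Ω(ℝⁿ) with v = g a.e. on ℝⁿ∖Ω (here ν_x(A) = ν(A − x)). -/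
open MeasureTheory Filter Set Topology
open scoped ENNReal Topology Pointwise Classical

/-- The energy functional E(v) = (1/4)∫∫_{(ℝⁿ×ℝⁿ)∖(Ωᶜ×Ωᶜ)} (v(x)−v(y))² dν_x(y) dx − ∫_Ω f v. -/
noncomputable def energy {n : ℕ} (ν : Measure (Eucl n)) (Ω : Set (Eucl n))
    (f v : Eucl n → ℝ) : ℝ :=
  (1/4) * (∫ x, ∫ z, (if x ∈ Ω ∨ x + z ∈ Ω then (v x - v (x + z)) ^ 2 else 0) ∂ν)
    - ∫ x in Ω, f x * v x

/-!
Write `Δu(x, z) = u(x) - u(x + z)` and `S` for the set of `(x, z)` with `x ∈ Ω` or `x + z ∈ Ω`.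
The swap `(x, z) ↦ (x + z, -z)` preserves `dx ⊗ ν` (translation invariance of Lebesgue measure
and symmetry of `ν`) and negates `Δu`, so the square-integrability of `Δu` on `Ω × ℝⁿ`, which
membership in `V_ν^Ω` provides, extends to `S`. On `S` the energy is `¼ ∫_S (Δu)² - ∫_Ω f u`,
and for `φ` vanishing off `Ω` the increment `Δφ` vanishes off `S`, so `⟨u, φ⟩_ν = ½ ∫_S Δu Δφ`.
Hence along the line `u + tφ` the energy is the quadratic
`E(u) + t (⟨u, φ⟩_ν - ∫_Ω f φ) + t² ¼ ∫_S (Δφ)²`, whose linear coefficient is the weak-form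
residual: `u` minimizes iff that coefficient vanishes for every admissible direction `φ`.
-/

lemma memLp_two_iff_lintegral_sq_lt_top {α : Type*} [MeasurableSpace α] {μ : Measure α}
    {f : α → ℝ} (hf : AEStronglyMeasurable f μ) :
    MemLp f 2 μ ↔ ∫⁻ x, ENNReal.ofReal (f x ^ 2) ∂μ < ∞ := by
  rw [memLp_two_iff_integrable_sq hf, Integrable,
    hasFiniteIntegral_iff_ofReal (ae_of_all _ fun x => sq_nonneg (f x))]
  exact and_iff_right (hf.pow 2)

lemma memLp_two_restrict_union {α : Type*} [MeasurableSpace α] {μ : Measure α}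
    {f : α → ℝ} {s t : Set α} (hs : MemLp f 2 (μ.restrict s)) (ht : MemLp f 2 (μ.restrict t)) :
    MemLp f 2 (μ.restrict (s ∪ t)) :=
  (memLp_two_iff_integrable_sq
    (aestronglyMeasurable_union_iff.2 ⟨hs.aestronglyMeasurable, ht.aestronglyMeasurable⟩)).2
    (IntegrableOn.union hs.integrable_sq ht.integrable_sq)

lemma integral_add_mul_sq {α : Type*} [MeasurableSpace α] {μ : Measure α} {a b : α → ℝ}
    (ha : MemLp a 2 μ) (hb : MemLp b 2 μ) (t : ℝ) :
    ∫ x, (a x + t * b x) ^ 2 ∂μ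
      = ∫ x, a x ^ 2 ∂μ + 2 * t * ∫ x, a x * b x ∂μ + t ^ 2 * ∫ x, b x ^ 2 ∂μ := by
  have hab : Integrable (fun x => a x * b x) μ := ha.integrable_mul hb
  have hexp : (fun x => (a x + t * b x) ^ 2)
      = fun x => a x ^ 2 + 2 * t * (a x * b x) + t ^ 2 * b x ^ 2 := by
    funext x; ring
  rw [hexp, integral_add (f := fun x => a x ^ 2 + 2 * t * (a x * b x))
      (ha.integrable_sq.add (hab.const_mul _)) (hb.integrable_sq.const_mul _),
    integral_add (f := fun x => a x ^ 2) ha.integrable_sq (hab.const_mul _),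
    integral_const_mul, integral_const_mul]

lemma integral_integral_eq_setIntegral {α β : Type*} [MeasurableSpace α] [MeasurableSpace β]
    {μ : Measure α} {ν : Measure β} [SFinite μ] [SFinite ν] {F : α × β → ℝ} {H : α → β → ℝ}
    {S : Set (α × β)} (hS : MeasurableSet S) (hF : IntegrableOn F S (μ.prod ν))
    (hH : Function.uncurry H =ᵐ[μ.prod ν] S.indicator F) :
    ∫ x, ∫ z, H x z ∂ν ∂μ = ∫ p in S, F p ∂(μ.prod ν) := by
  rw [integral_integral (((integrable_indicator_iff hS).2 hF).congr hH.symm),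
    ← integral_indicator hS]
  exact integral_congr_ae hH

lemma eq_zero_of_forall_mul_add_sq_nonneg {a b : ℝ} (h : ∀ t : ℝ, 0 ≤ t * b + t ^ 2 * a) :
    b = 0 := by
  have hd := discrim_le_zero (a := a) (b := b) (c := 0) fun t => by linarith [h t]
  rw [discrim, mul_zero, sub_zero] at hd
  nlinarith

section Increment

variable {G : Type*} [AddGroup G]

def increment (w : G → ℝ) (p : G × G) : ℝ := w p.1 - w (p.1 + p.2)

/-- Sends the pair of points `(x, x + z)` to `(x + z, x)`. -/
def endpointSwap (p : G × G) : G × G := (p.1 + p.2, -p.2)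

/-- The domain `(ℝⁿ × ℝⁿ) ∖ (Ωᶜ × Ωᶜ)` of the energy, in the coordinates `(x, z) ↦ (x, x + z)`. -/
def interactionSet (Ω : Set G) : Set (G × G) := {p | p.1 ∈ Ω ∨ p.1 + p.2 ∈ Ω}

lemma increment_add_mul (u φ : G → ℝ) (t : ℝ) :
    increment (fun x => u x + t * φ x) = fun p => increment u p + t * increment φ p := by
  funext p; simp only [increment]; ring

lemma increment_endpointSwap (w : G → ℝ) (p : G × G) :
    increment w (endpointSwap p) = -increment w p := by
  simp [increment, endpointSwap]

lemma interactionSet_eq_union (Ω : Set G) :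
    interactionSet Ω = Ω ×ˢ univ ∪ endpointSwap ⁻¹' (Ω ×ˢ univ) := by
  ext p; simp [interactionSet, endpointSwap]

variable [MeasurableSpace G] [MeasurableAdd₂ G]

lemma measurableSet_interactionSet {Ω : Set G} (hΩ : MeasurableSet Ω) :
    MeasurableSet (interactionSet Ω) :=
  (measurable_fst hΩ).union ((measurable_fst.add measurable_snd) hΩ)

variable [MeasurableNeg G] {μ ν : Measure G} [SFinite μ] [SFinite ν]

lemma measurePreserving_endpointSwap [μ.IsAddRightInvariant] [ν.IsNegInvariant] :
    MeasurePreserving endpointSwap (μ.prod ν) (μ.prod ν) :=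
  ((MeasurePreserving.id μ).prod (Measure.measurePreserving_neg ν)).comp
    (measurePreserving_add_prod μ ν)

variable [μ.IsAddRightInvariant] [ν.IsNegInvariant]

lemma memLp_increment_interactionSet {Ω : Set G} (hΩ : MeasurableSet Ω) {w : G → ℝ}
    (hw : MemLp (increment w) 2 ((μ.restrict Ω).prod ν)) :
    MemLp (increment w) 2 ((μ.prod ν).restrict (interactionSet Ω)) := by
  have hA : MeasurableSet (Ω ×ˢ (univ : Set G)) := hΩ.prod .univ
  rw [← Measure.restrict_univ (μ := ν), Measure.prod_restrict] at hw
  have hswap := (hw.comp_measurePreserving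
    (measurePreserving_endpointSwap.restrict_preimage hA)).neg
  simp only [Function.comp_def, increment_endpointSwap, Pi.neg_def, neg_neg] at hswap
  rw [interactionSet_eq_union]
  exact memLp_two_restrict_union hw hswap

lemma ae_increment_eq_zero_of_notMem_interactionSet {Ω : Set G} {φ : G → ℝ}
    (hφ : ∀ᵐ x ∂μ, x ∉ Ω → φ x = 0) :
    ∀ᵐ p ∂(μ.prod ν), p ∉ interactionSet Ω → increment φ p = 0 := by
  have h₁ : ∀ᵐ p ∂(μ.prod ν), p.1 ∉ Ω → φ p.1 = 0 :=
    Measure.quasiMeasurePreserving_fst.ae hφ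
  have h₂ : ∀ᵐ p ∂(μ.prod ν), p.1 + p.2 ∉ Ω → φ (p.1 + p.2) = 0 :=
    measurePreserving_endpointSwap.quasiMeasurePreserving.ae h₁
  filter_upwards [h₁, h₂] with p hp₁ hp₂ hp
  simp only [interactionSet, mem_ofPred_eq, not_or] at hp
  rw [increment, hp₁ hp.1, hp₂ hp.2, sub_zero]

end Increment

namespace IsSymmLevy

variable {n : ℕ} {ν : Measure (Eucl n)}

lemma measure_le_norm_lt_top (hν : IsSymmLevy ν) {r : ℝ} (hr : 0 < r) :
    ν {y | r ≤ ‖y‖} < ∞ := by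
  have hc : ENNReal.ofReal (min 1 (r ^ 2)) ≠ 0 := by
    simp only [ne_eq, ENNReal.ofReal_eq_zero, not_le, lt_min_iff]
    exact ⟨one_pos, by positivity⟩
  have hmarkov : ENNReal.ofReal (min 1 (r ^ 2)) * ν {y | r ≤ ‖y‖}
      ≤ ∫⁻ y, ENNReal.ofReal (min 1 (‖y‖ ^ 2)) ∂ν := by
    refine (mul_le_mul_right (measure_mono fun y (hy : r ≤ ‖y‖) => ?_) _).trans
      (mul_meas_ge_le_lintegral₀ (by fun_prop) _)
    exact ENNReal.ofReal_le_ofReal (min_le_min le_rfl (by gcongr))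
  exact ENNReal.lt_top_of_mul_ne_top_right (hmarkov.trans_lt hν.2.2).ne hc

lemma sigmaFinite (hν : IsSymmLevy ν) : SigmaFinite ν := by
  refine ⟨⟨⟨fun k : ℕ => {0} ∪ {y | 1 / ((k : ℝ) + 1) ≤ ‖y‖}, fun _ => trivial,
    fun k => (measure_union_le _ _).trans_lt ?_, ?_⟩⟩⟩
  · rw [hν.1, zero_add]
    exact hν.measure_le_norm_lt_top (by positivity)
  · refine eq_univ_of_forall fun y => ?_
    rcases eq_or_ne y 0 with rfl | hy
    · exact mem_iUnion.2 ⟨0, Or.inl rfl⟩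
    · obtain ⟨k, hk⟩ := exists_nat_one_div_lt (norm_pos_iff.2 hy)
      exact mem_iUnion.2 ⟨k, Or.inr hk.le⟩

lemma isNegInvariant (hν : IsSymmLevy ν) : ν.IsNegInvariant := by
  refine ⟨Measure.ext fun A hA => ?_⟩
  rw [Measure.neg_apply, hν.2.1 A hA]

end IsSymmLevy

section Dirichlet

variable {n : ℕ} {ν : Measure (Eucl n)} {Ω : Set (Eucl n)} [SFinite ν]

lemma memV_iff {u : Eucl n → ℝ} :
    MemV ν Ω u ↔ Measurable u ∧ MemLp u 2 (volume.restrict Ω) ∧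
      MemLp (increment u) 2 ((volume.restrict Ω).prod ν) := by
  refine and_congr_right fun hu => ?_
  have hinc : Measurable (increment u) :=
    (hu.comp measurable_fst).sub (hu.comp (measurable_fst.add measurable_snd))
  rw [memLp_two_iff_lintegral_sq_lt_top hu.aestronglyMeasurable,
    memLp_two_iff_lintegral_sq_lt_top hinc.aestronglyMeasurable,
    lintegral_prod _ (hinc.pow_const 2).ennreal_ofReal.aemeasurable]
  simp [sobSq, increment, lt_top_iff_ne_top, ENNReal.mul_eq_top]

lemma MemV.add_mul {u φ : Eucl n → ℝ} (hu : MemV ν Ω u) (hφ : MemV ν Ω φ) (t : ℝ) :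
    MemV ν Ω (fun x => u x + t * φ x) := by
  rw [memV_iff] at *
  refine ⟨hu.1.add (hφ.1.const_mul t), hu.2.1.add (hφ.2.1.const_mul t), ?_⟩
  rw [increment_add_mul]
  exact hu.2.2.add (hφ.2.2.const_mul t)

lemma MemV.memH_sub {g u v : Eucl n → ℝ} (hv : MemV ν Ω v) (hu : MemV ν Ω u)
    (hvg : ∀ᵐ x ∂volume, x ∉ Ω → v x = g x) (hug : ∀ᵐ x ∂volume, x ∉ Ω → u x = g x) :
    MemH ν Ω (fun x => v x - u x) := by
  refine ⟨by simpa [sub_eq_add_neg] using hv.add_mul hu (-1), ?_⟩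
  filter_upwards [hvg, hug] with x hvx hux hx
  rw [hvx hx, hux hx, sub_self]

variable [ν.IsNegInvariant]

lemma MemV.memLp_increment_interactionSet (hΩ : MeasurableSet Ω) {u : Eucl n → ℝ}
    (hu : MemV ν Ω u) :
    MemLp (increment u) 2 ((volume.prod ν).restrict (interactionSet Ω)) :=
  _root_.memLp_increment_interactionSet hΩ (memV_iff.1 hu).2.2

lemma energy_eq (hΩ : MeasurableSet Ω) (f : Eucl n → ℝ) {w : Eucl n → ℝ} (hw : MemV ν Ω w) :
    energy ν Ω f w = 1 / 4 * ∫ p in interactionSet Ω, increment w p ^ 2 ∂(volume.prod ν)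
      - ∫ x in Ω, f x * w x := by
  rw [energy, integral_integral_eq_setIntegral (measurableSet_interactionSet hΩ)
    (hw.memLp_increment_interactionSet hΩ).integrable_sq (ae_of_all _ fun ⟨x, z⟩ => ?_)]
  simp [indicator_apply, interactionSet, increment]

lemma formB_eq (hΩ : MeasurableSet Ω) {u φ : Eucl n → ℝ} (hu : MemV ν Ω u) (hφ : MemH ν Ω φ) :
    formB ν u φ
      = 1 / 2 * ∫ p in interactionSet Ω, increment u p * increment φ p ∂(volume.prod ν) := by
  rw [formB, integral_integral_eq_setIntegral (F := fun p => increment u p * increment φ p)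
    (measurableSet_interactionSet hΩ) ((hu.memLp_increment_interactionSet hΩ).integrable_mul
      (hφ.1.memLp_increment_interactionSet hΩ)) ?_]
  filter_upwards [ae_increment_eq_zero_of_notMem_interactionSet hφ.2] with ⟨x, z⟩ hp
  by_cases hpS : (x, z) ∈ interactionSet Ω
  · simp [indicator_of_mem hpS, increment]
  · have hφ0 : φ x - φ (x + z) = 0 := hp hpS
    simp [indicator_of_notMem hpS, hφ0]

lemma energy_add_mul (hΩ : MeasurableSet Ω) {f : Eucl n → ℝ} (hf : MemLp f 2 (volume.restrict Ω))
    {u φ : Eucl n → ℝ} (hu : MemV ν Ω u) (hφ : MemH ν Ω φ) (t : ℝ) :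
    energy ν Ω f (fun x => u x + t * φ x) = energy ν Ω f u
      + t * (formB ν u φ - ∫ x in Ω, f x * φ x)
      + t ^ 2 * (1 / 4 * ∫ p in interactionSet Ω, increment φ p ^ 2 ∂(volume.prod ν)) := by
  have hfu : Integrable (fun x => f x * u x) (volume.restrict Ω) :=
    hf.integrable_mul (memV_iff.1 hu).2.1
  have hfφ : Integrable (fun x => f x * φ x) (volume.restrict Ω) :=
    hf.integrable_mul (memV_iff.1 hφ.1).2.1
  have hsource : ∫ x in Ω, f x * (u x + t * φ x)
      = (∫ x in Ω, f x * u x) + t * ∫ x in Ω, f x * φ x := by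
    simp_rw [mul_add, mul_left_comm (f _) t]
    rw [integral_add hfu (hfφ.const_mul t), integral_const_mul]
  rw [energy_eq hΩ f (hu.add_mul hφ.1 t), energy_eq hΩ f hu, formB_eq hΩ hu hφ,
    increment_add_mul, integral_add_mul_sq (hu.memLp_increment_interactionSet hΩ)
      (hφ.1.memLp_increment_interactionSet hΩ), hsource]
  ring

end Dirichlet

theorem dirichlet_stmt9_general {n : ℕ} (ν : Measure (Eucl n)) (hν : IsSymmLevy ν)
    (Ω : Set (Eucl n)) (hΩo : IsOpen Ω)
    (f g : Eucl n → ℝ) (hf : MemLp f 2 ((volume : Measure (Eucl n)).restrict Ω))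
    (u : Eucl n → ℝ) (hu : MemV ν Ω u) :
    IsWeakSol ν Ω f g u ↔
      ((∀ᵐ x ∂(volume : Measure (Eucl n)), x ∉ Ω → u x = g x) ∧
        ∀ v : Eucl n → ℝ, MemV ν Ω v →
          (∀ᵐ x ∂(volume : Measure (Eucl n)), x ∉ Ω → v x = g x) →
          energy ν Ω f u ≤ energy ν Ω f v) := by
  have := hν.sigmaFinite
  have := hν.isNegInvariant
  have hΩ := hΩo.measurableSet
  constructor
  · rintro ⟨-, hug, hweak⟩
    refine ⟨hug, fun v hv hvg => ?_⟩
    have hφ := hv.memH_sub hu hvg hug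
    have hv_eq := energy_add_mul hΩ hf hu hφ 1
    simp only [one_mul, add_sub_cancel, hweak _ hφ, sub_self] at hv_eq
    rw [hv_eq]
    have : 0 ≤ ∫ p in interactionSet Ω, increment (fun x => v x - u x) p ^ 2 ∂(volume.prod ν) :=
      integral_nonneg fun p => sq_nonneg _
    linarith
  · rintro ⟨hug, hmin⟩
    refine ⟨hu, hug, fun φ hφ => sub_eq_zero.1 (eq_zero_of_forall_mul_add_sq_nonneg
      (a := 1 / 4 * ∫ p in interactionSet Ω, increment φ p ^ 2 ∂(volume.prod ν)) fun t => ?_)⟩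
    have hvg : ∀ᵐ x ∂volume, x ∉ Ω → u x + t * φ x = g x := by
      filter_upwards [hug, hφ.2] with x hux hφx hx
      rw [hux hx, hφx hx, mul_zero, add_zero]
    have hmin_t := hmin _ (hu.add_mul hφ.1 t) hvg
    rw [energy_add_mul hΩ hf hu hφ t] at hmin_t
    linarith

theorem dirichlet_stmt9 {n : ℕ} (ν : Measure (Eucl n)) (hν : IsSymmLevy ν)
    (Ω : Set (Eucl n)) (hΩo : IsOpen Ω) (hΩne : Ω.Nonempty)
    (hΩb : Bornology.IsBounded Ω)
    (f g : Eucl n → ℝ) (hf : MemLp f 2 ((volume : Measure (Eucl n)).restrict Ω))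
    (u : Eucl n → ℝ) (hu : MemV ν Ω u) :
    IsWeakSol ν Ω f g u ↔
      ((∀ᵐ x ∂(volume : Measure (Eucl n)), x ∉ Ω → u x = g x) ∧
        ∀ v : Eucl n → ℝ, MemV ν Ω v →
          (∀ᵐ x ∂(volume : Measure (Eucl n)), x ∉ Ω → v x = g x) →
          energy ν Ω f u ≤ energy ν Ω f v) :=
  dirichlet_stmt9_general ν hν Ω hΩo f g hf u hu
end

section
/- Let ν be a symmetric Lévy measure on ℝⁿ and Ω ⊆ ℝⁿ a nonempty bounded open set. If u ∈ C²_b(ℝⁿ), then with f := Lu ∈ L²(Ω) one has ⟨u,φ⟩_ν = ∫_Ω f φ dx for every φ ∈ H_ν^Ω(ℝⁿ); that is, every C²_b solution of Lu = f in Ω, u = g on ℝⁿ∖Ω is a weak solution. -/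
open MeasureTheory Filter Set Topology
open scoped ENNReal Topology Pointwise Classical

/-!
Symmetrising with `ν(-A) = ν(A)` writes the truncated operator as
`L_ε u(x) = ½ ∫_{|y| ≥ ε} (2u(x) - u(x+y) - u(x-y)) dν(y)`, and for `u ∈ C²_b` the second
difference is `O(min(|y|², 1))`; so the truncations are bounded uniformly in `x` and `ε`, and
`f = Lu` is bounded on `Ω`, hence in `L²(Ω)`. For `φ ∈ H_ν^Ω`, the substitution
`(y, z) ↦ (y + z, -z)`, which preserves `dy ⊗ ν`, turns the truncated form
`∫∫_{|z| ≥ ε} (u(y) - u(y+z))(φ(y) - φ(y+z))` into `2 ∫ L_ε u · φ`. The untruncated integrand is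
integrable because `u` is bounded and Lipschitz and `φ` has finite energy, so dominated convergence
on both sides lets `ε → 0`.
-/

section SecondDifference

variable {E F : Type*} [NormedAddCommGroup E] [NormedSpace ℝ E]
  [NormedAddCommGroup F] [NormedSpace ℝ F] {u : E → F} {C : ℝ}

lemma norm_sub_le_of_norm_iteratedFDeriv_one_le (hu : ContDiff ℝ 1 u)
    (hC : ∀ x, ‖iteratedFDeriv ℝ 1 u x‖ ≤ C) (x y : E) : ‖u x - u y‖ ≤ C * ‖x - y‖ :=
  Convex.norm_image_sub_le_of_norm_fderiv_le (fun z _ => hu.differentiable one_ne_zero z)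
    (fun z _ => (norm_iteratedFDeriv_one u).symm.trans_le (hC z)) convex_univ
    (mem_univ y) (mem_univ x)

lemma norm_fderiv_sub_fderiv_le (hu : ContDiff ℝ 2 u)
    (hC : ∀ x, ‖iteratedFDeriv ℝ 2 u x‖ ≤ C) (x y : E) :
    ‖fderiv ℝ u x - fderiv ℝ u y‖ ≤ C * ‖x - y‖ :=
  norm_sub_le_of_norm_iteratedFDeriv_one_le (hu.fderiv_right (m := 1) le_rfl)
    (fun z => norm_iteratedFDeriv_fderiv.trans_le (hC z)) x y

lemma norm_second_difference_le (hu : ContDiff ℝ 2 u)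
    (hC : ∀ x, ‖iteratedFDeriv ℝ 2 u x‖ ≤ C) (x z : E) :
    ‖u (x + z) + u (x - z) - 2 • u x‖ ≤ 2 * C * ‖z‖ ^ 2 := by
  have hd : Differentiable ℝ u := hu.differentiable two_ne_zero
  have hC0 : 0 ≤ C := (norm_nonneg _).trans (hC x)
  let g : ℝ → F := fun t => u (x + t • z) + u (x - t • z)
  have hg : ∀ t, HasDerivAt g (fderiv ℝ u (x + t • z) z - fderiv ℝ u (x - t • z) z) t := by
    intro t
    have hp : HasDerivAt (fun s : ℝ => x + s • z) z t := by
      simpa using ((hasDerivAt_id t).smul_const z).const_add x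
    have hm : HasDerivAt (fun s : ℝ => x - s • z) (-z) t := by
      simpa using ((hasDerivAt_id t).smul_const z).const_sub x
    have := ((hd _).hasFDerivAt.comp_hasDerivAt t hp).add ((hd _).hasFDerivAt.comp_hasDerivAt t hm)
    rwa [map_neg, ← sub_eq_add_neg] at this
  have hg' : ∀ t ∈ Icc (0 : ℝ) 1,
      ‖fderiv ℝ u (x + t • z) z - fderiv ℝ u (x - t • z) z‖ ≤ 2 * C * ‖z‖ ^ 2 := by
    rintro t ⟨ht0, ht1⟩
    rw [← sub_apply]
    calc _ ≤ ‖fderiv ℝ u (x + t • z) - fderiv ℝ u (x - t • z)‖ * ‖z‖ :=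
          ContinuousLinearMap.le_opNorm _ _
      _ ≤ C * ‖(x + t • z) - (x - t • z)‖ * ‖z‖ := by
          gcongr; exact norm_fderiv_sub_fderiv_le hu hC _ _
      _ = C * (2 * t) * ‖z‖ ^ 2 := by
          rw [show (x + t • z) - (x - t • z) = (2 * t) • z by module, norm_smul,
            Real.norm_of_nonneg (by linarith)]
          ring
      _ ≤ 2 * C * ‖z‖ ^ 2 := by nlinarith [mul_nonneg hC0 (sq_nonneg ‖z‖)]
  have hmvt := Convex.norm_image_sub_le_of_norm_hasDerivWithin_le
    (fun t _ => (hg t).hasDerivWithinAt) hg' (convex_Icc 0 1) (left_mem_Icc.2 zero_le_one)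
    (right_mem_Icc.2 zero_le_one)
  simpa [g, two_smul] using hmvt

end SecondDifference

namespace IsSymmLevy

variable {n : ℕ} {ν : Measure (Eucl n)}

lemma ae_ne_zero (hν : IsSymmLevy ν) : ∀ᵐ z ∂ν, z ≠ 0 :=
  compl_mem_ae_iff.2 hν.1

lemma measure_tail_lt_top (hν : IsSymmLevy ν) {ε : ℝ} (hε : 0 < ε) :
    ν {y | ε ≤ ‖y‖} < ∞ := by
  set c := ENNReal.ofReal (min 1 (ε ^ 2))
  have hc : c ≠ 0 := (ENNReal.ofReal_pos.2 (by positivity)).ne'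
  calc ν {y | ε ≤ ‖y‖} ≤ ν {y | c ≤ ENNReal.ofReal (min 1 (‖y‖ ^ 2))} :=
        measure_mono fun y (hy : ε ≤ ‖y‖) =>
          ENNReal.ofReal_le_ofReal (min_le_min le_rfl (by gcongr))
    _ ≤ (∫⁻ y, ENNReal.ofReal (min 1 (‖y‖ ^ 2)) ∂ν) / c :=
        meas_ge_le_lintegral_div (by fun_prop) hc ENNReal.ofReal_ne_top
    _ < ∞ := ENNReal.div_lt_top hν.2.2.ne hc

lemma lintegral_min_lt_top (hν : IsSymmLevy ν) (a b : ℝ) :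
    ∫⁻ z, ENNReal.ofReal (min (a * ‖z‖ ^ 2) b) ∂ν < ∞ := by
  have hpt : ∀ r : ℝ, min (a * r ^ 2) b ≤ max a b * min 1 (r ^ 2) := fun r => by
    rcases le_total (r ^ 2) 1 with h | h
    · rw [min_eq_right h]
      exact (min_le_left _ _).trans (by gcongr; exact le_max_left a b)
    · rw [min_eq_left h, mul_one]
      exact (min_le_right _ _).trans (le_max_right a b)
  calc ∫⁻ z, ENNReal.ofReal (min (a * ‖z‖ ^ 2) b) ∂ν
      ≤ ∫⁻ z, ENNReal.ofReal (max a b) * ENNReal.ofReal (min 1 (‖z‖ ^ 2)) ∂ν :=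
        lintegral_mono fun z => (ENNReal.ofReal_le_ofReal (hpt ‖z‖)).trans
          (ENNReal.ofReal_mul' (by positivity)).le
    _ = ENNReal.ofReal (max a b) * ∫⁻ z, ENNReal.ofReal (min 1 (‖z‖ ^ 2)) ∂ν :=
        lintegral_const_mul' _ _ ENNReal.ofReal_ne_top
    _ < ∞ := ENNReal.mul_lt_top ENNReal.ofReal_lt_top hν.2.2

end IsSymmLevy

section JumpSwap

variable {G : Type*} [AddGroup G] [MeasurableSpace G] [MeasurableAdd₂ G] [MeasurableNeg G]

/-- Exchanges the two endpoints `y` and `y + z` of the jump `(y, z)`. -/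
def MeasurableEquiv.jumpSwap : G × G ≃ᵐ G × G where
  toFun p := (p.1 + p.2, -p.2)
  invFun p := (p.1 + p.2, -p.2)
  left_inv p := by simp
  right_inv p := by simp
  measurable_toFun := (measurable_fst.add measurable_snd).prodMk measurable_snd.neg
  measurable_invFun := (measurable_fst.add measurable_snd).prodMk measurable_snd.neg

@[simp]
lemma MeasurableEquiv.jumpSwap_apply (p : G × G) : jumpSwap p = (p.1 + p.2, -p.2) := rfl

lemma measurePreserving_jumpSwap (μ ν : Measure G) [SFinite μ] [SFinite ν]
    [μ.IsAddRightInvariant] [ν.IsNegInvariant] :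
    MeasurePreserving MeasurableEquiv.jumpSwap (μ.prod ν) (μ.prod ν) :=
  ((MeasurePreserving.id μ).prod (Measure.measurePreserving_neg ν)).comp
    (measurePreserving_add_prod μ ν)

end JumpSwap

section Truncation

variable {n : ℕ} {ν : Measure (Eucl n)} {u : Eucl n → ℝ}

lemma truncL_eq_half_integral (hν : IsSymmLevy ν) (hu : Measurable u) {C : ℝ}
    (hC : ∀ x, |u x| ≤ C) (x : Eucl n) {ε : ℝ} (hε : 0 < ε) :
    truncL ν u x ε = 1 / 2 * ∫ y in {y | ε ≤ ‖y‖}, (2 * u x - u (x + y) - u (x - y)) ∂ν := by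
  have := hν.isNegInvariant
  set T := {y : Eucl n | ε ≤ ‖y‖}
  have hint : ∀ a : Eucl n → Eucl n, Measurable a →
      IntegrableOn (fun y => u x - u (a y)) T ν := fun a ha =>
    IntegrableOn.of_bound (hν.measure_tail_lt_top hε)
      (measurable_const.sub (hu.comp ha)).aestronglyMeasurable (2 * C)
      (ae_of_all _ fun y => by
        rw [Real.norm_eq_abs]
        exact (abs_sub _ _).trans (by linarith [hC x, hC (a y)]))
  have hneg : ∫ y in T, (u x - u (x - y)) ∂ν = truncL ν u x ε := by
    have := (Measure.measurePreserving_neg ν).setIntegral_preimage_emb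
      (MeasurableEquiv.neg _).measurableEmbedding (fun y => u x - u (x - y)) T
    simpa [T, truncL] using this.symm
  calc truncL ν u x ε
      = 1 / 2 * (∫ y in T, (u x - u (x + y)) ∂ν + ∫ y in T, (u x - u (x - y)) ∂ν) := by
        rw [hneg, truncL]; ring
    _ = _ := by
        rw [← integral_add (hint _ (by fun_prop)) (hint _ (by fun_prop))]
        congr 2 with y
        ring

lemma abs_truncL_le (hν : IsSymmLevy ν) (hu : Measurable u) {C₀ C₂ : ℝ}
    (hC₀ : ∀ x, |u x| ≤ C₀) (hC₂ : ∀ x z, |u (x + z) + u (x - z) - 2 * u x| ≤ C₂ * ‖z‖ ^ 2)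
    (x : Eucl n) {ε : ℝ} (hε : 0 < ε) :
    |truncL ν u x ε| ≤ (∫⁻ z, ENNReal.ofReal (min (C₂ * ‖z‖ ^ 2) (4 * C₀)) ∂ν).toReal := by
  have hpt : ∀ y, ‖2 * u x - u (x + y) - u (x - y)‖ ≤ min (C₂ * ‖y‖ ^ 2) (4 * C₀) := by
    intro y
    rw [Real.norm_eq_abs, show 2 * u x - u (x + y) - u (x - y)
      = -(u (x + y) + u (x - y) - 2 * u x) by ring, abs_neg]
    refine le_min (hC₂ x y) (abs_le.2 ⟨?_, ?_⟩) <;>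
      linarith [abs_le.1 (hC₀ x), abs_le.1 (hC₀ (x + y)), abs_le.1 (hC₀ (x - y))]
  have hint : |∫ y in {y | ε ≤ ‖y‖}, (2 * u x - u (x + y) - u (x - y)) ∂ν|
      ≤ (∫⁻ z, ENNReal.ofReal (min (C₂ * ‖z‖ ^ 2) (4 * C₀)) ∂ν).toReal := by
    rw [← Real.norm_eq_abs]
    refine (norm_integral_le_lintegral_norm _).trans
      (ENNReal.toReal_mono (hν.lintegral_min_lt_top _ _).ne ?_)
    exact (setLIntegral_le_lintegral _ _).trans
      (lintegral_mono fun y => ENNReal.ofReal_le_ofReal (hpt y))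
  rw [truncL_eq_half_integral hν hu hC₀ x hε, abs_mul]
  linarith [abs_nonneg (∫ y in {y | ε ≤ ‖y‖}, (2 * u x - u (x + y) - u (x - y)) ∂ν),
    abs_of_pos (one_half_pos : (0 : ℝ) < 1 / 2)]

lemma stronglyMeasurable_truncL [SFinite ν] (hu : Measurable u) (ε : ℝ) :
    StronglyMeasurable fun x => truncL ν u x ε :=
  (show Measurable fun p : Eucl n × Eucl n => u p.1 - u (p.1 + p.2) by fun_prop)
    |>.stronglyMeasurable.integral_prod_right'

lemma memLp_of_tendsto_truncL [SFinite ν] (hu : Measurable u) {M : ℝ}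
    (hM : ∀ x ε, 0 < ε → |truncL ν u x ε| ≤ M) {Ω : Set (Eucl n)} (hΩ : MeasurableSet Ω)
    (hΩfin : volume Ω < ∞) {f : Eucl n → ℝ}
    (hf : ∀ x ∈ Ω, Tendsto (truncL ν u x) (𝓝[>] 0) (𝓝 (f x))) (p : ℝ≥0∞) :
    MemLp f p (volume.restrict Ω) := by
  have : IsFiniteMeasure (volume.restrict Ω) := isFiniteMeasure_restrict.2 hΩfin.ne
  refine .of_bound (aestronglyMeasurable_of_tendsto_ae _
    (fun ε => (stronglyMeasurable_truncL hu ε).aestronglyMeasurable)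
    (ae_restrict_of_forall_mem hΩ hf)) M (ae_restrict_of_forall_mem hΩ fun x hx => ?_)
  exact le_of_tendsto (hf x hx).norm (eventually_nhdsWithin_of_forall fun ε hε => hM x ε hε)

end Truncation

section JumpEnergy

variable {n : ℕ} {ν : Measure (Eucl n)} {Ω : Set (Eucl n)}

lemma MemV.lintegral_jump_sq_lt_top {w : Eucl n → ℝ} (hw : MemV ν Ω w) :
    ∫⁻ y in Ω, ∫⁻ z, ENNReal.ofReal ((w y - w (y + z)) ^ 2) ∂ν < ∞ :=
  ENNReal.lt_top_of_mul_ne_top_right (ENNReal.add_lt_top.1 hw.2).2.ne (by norm_num)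

lemma MemH.integrable {φ : Eucl n → ℝ} (hφ : MemH ν Ω φ) (hΩfin : volume Ω < ∞) : Integrable φ := by
  have : IsFiniteMeasure (volume.restrict Ω) := isFiniteMeasure_restrict.2 hΩfin.ne
  have hsq : Integrable (fun x => φ x ^ 2) (volume.restrict Ω) :=
    ⟨(hφ.1.1.pow_const 2).aestronglyMeasurable,
      (hasFiniteIntegral_iff_ofReal (ae_of_all _ fun x => sq_nonneg (φ x))).2
        (ENNReal.add_lt_top.1 hφ.1.2).1⟩
  exact IntegrableOn.integrable_of_ae_notMem_eq_zero
    (((memLp_two_iff_integrable_sq hφ.1.1.aestronglyMeasurable).2 hsq).integrable one_le_two) hφ.2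

lemma IsSymmLevy.lintegral_jump_sq_lt_top (hν : IsSymmLevy ν) (hΩfin : volume Ω < ∞)
    {u : Eucl n → ℝ} {C₀ C₁ : ℝ} (hC₀ : ∀ x, |u x| ≤ C₀)
    (hC₁ : ∀ x y, |u x - u y| ≤ C₁ * ‖x - y‖) :
    ∫⁻ y in Ω, ∫⁻ z, ENNReal.ofReal ((u y - u (y + z)) ^ 2) ∂ν < ∞ := by
  have hpt : ∀ y z, (u y - u (y + z)) ^ 2 ≤ min (C₁ ^ 2 * ‖z‖ ^ 2) ((2 * C₀) ^ 2) := by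
    intro y z
    have h₁ : |u y - u (y + z)| ≤ C₁ * ‖z‖ := by simpa using hC₁ y (y + z)
    have h₀ : |u y - u (y + z)| ≤ 2 * C₀ :=
      (abs_sub _ _).trans (by linarith [hC₀ y, hC₀ (y + z)])
    exact le_min (by simpa [sq_abs, mul_pow] using pow_le_pow_left₀ (abs_nonneg _) h₁ 2)
      (by simpa [sq_abs] using pow_le_pow_left₀ (abs_nonneg _) h₀ 2)
  calc ∫⁻ y in Ω, ∫⁻ z, ENNReal.ofReal ((u y - u (y + z)) ^ 2) ∂ν
      ≤ ∫⁻ _ in Ω, ∫⁻ z, ENNReal.ofReal (min (C₁ ^ 2 * ‖z‖ ^ 2) ((2 * C₀) ^ 2)) ∂ν :=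
        lintegral_mono fun y => lintegral_mono fun z => ENNReal.ofReal_le_ofReal (hpt y z)
    _ = (∫⁻ z, ENNReal.ofReal (min (C₁ ^ 2 * ‖z‖ ^ 2) ((2 * C₀) ^ 2)) ∂ν) * volume Ω :=
        setLIntegral_const _ _
    _ < ∞ := ENNReal.mul_lt_top (hν.lintegral_min_lt_top _ _) hΩfin

lemma IsSymmLevy.setLIntegral_jump_sq_lt_top (hν : IsSymmLevy ν) [SFinite ν] {w : Eucl n → ℝ}
    (hw : Measurable w)
    (hE : ∫⁻ y in Ω, ∫⁻ z, ENNReal.ofReal ((w y - w (y + z)) ^ 2) ∂ν < ∞) :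
    ∫⁻ p in Ω ×ˢ univ ∪ MeasurableEquiv.jumpSwap ⁻¹' (Ω ×ˢ univ),
      ENNReal.ofReal ((w p.1 - w (p.1 + p.2)) ^ 2) ∂(volume.prod ν) < ∞ := by
  have := hν.isNegInvariant
  set J : Eucl n × Eucl n → ℝ≥0∞ := fun p => ENNReal.ofReal ((w p.1 - w (p.1 + p.2)) ^ 2)
  have hJ : ∫⁻ p in Ω ×ˢ univ, J p ∂(volume.prod ν) = ∫⁻ y in Ω, ∫⁻ z, J (y, z) ∂ν := by
    rw [setLIntegral_prod _ (by fun_prop), Measure.restrict_univ]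
  have hJσ : ∫⁻ p in MeasurableEquiv.jumpSwap ⁻¹' (Ω ×ˢ univ), J p ∂(volume.prod ν)
      = ∫⁻ p in Ω ×ˢ univ, J p ∂(volume.prod ν) :=
    (lintegral_congr fun p => by simp [J, sub_sq_comm (w p.1)]).trans
      ((measurePreserving_jumpSwap volume ν).setLIntegral_comp_preimage_emb
        MeasurableEquiv.jumpSwap.measurableEmbedding J _)
  calc _ ≤ ∫⁻ p in Ω ×ˢ univ, J p ∂(volume.prod ν)
        + ∫⁻ p in MeasurableEquiv.jumpSwap ⁻¹' (Ω ×ˢ univ), J p ∂(volume.prod ν) :=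
        lintegral_union_le _ _ _
    _ < ∞ := by
        rw [hJσ, hJ]
        exact ENNReal.add_lt_top.2 ⟨hE, hE⟩

lemma IsSymmLevy.integrable_jump_mul_jump (hν : IsSymmLevy ν) [SFinite ν] {u φ : Eucl n → ℝ}
    (hu : Measurable u) (hφ : Measurable φ) (hΩ : MeasurableSet Ω)
    (hφΩ : ∀ᵐ x, x ∉ Ω → φ x = 0)
    (hEu : ∫⁻ y in Ω, ∫⁻ z, ENNReal.ofReal ((u y - u (y + z)) ^ 2) ∂ν < ∞)
    (hEφ : ∫⁻ y in Ω, ∫⁻ z, ENNReal.ofReal ((φ y - φ (y + z)) ^ 2) ∂ν < ∞) :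
    Integrable (fun p : Eucl n × Eucl n => (u p.1 - u (p.1 + p.2)) * (φ p.1 - φ (p.1 + p.2)))
      (volume.prod ν) := by
  have := hν.isNegInvariant
  have hσ := measurePreserving_jumpSwap (volume : Measure (Eucl n)) ν
  set D := Ω ×ˢ univ ∪ MeasurableEquiv.jumpSwap ⁻¹' (Ω ×ˢ univ)
  have hD : MeasurableSet D :=
    (hΩ.prod .univ).union (hσ.measurable (hΩ.prod .univ))
  have hφ₁ : ∀ᵐ p ∂(volume.prod ν), p.1 ∉ Ω → φ p.1 = 0 :=
    Measure.quasiMeasurePreserving_fst.ae hφΩ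
  have hφD : ∀ᵐ p ∂(volume.prod ν), p ∉ D → φ p.1 - φ (p.1 + p.2) = 0 := by
    filter_upwards [hφ₁, hσ.quasiMeasurePreserving.ae hφ₁] with p h₁ h₂ hpD
    simp only [D, mem_union, mem_prod, mem_preimage, MeasurableEquiv.jumpSwap_apply, mem_univ,
      and_true, not_or] at hpD h₂
    rw [h₁ hpD.1, h₂ hpD.2, sub_zero]
  have hbound : ∀ᵐ p ∂(volume.prod ν),
      ENNReal.ofReal ‖(u p.1 - u (p.1 + p.2)) * (φ p.1 - φ (p.1 + p.2))‖
        ≤ D.indicator (fun p => ENNReal.ofReal ((u p.1 - u (p.1 + p.2)) ^ 2)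
          + ENNReal.ofReal ((φ p.1 - φ (p.1 + p.2)) ^ 2)) p := by
    filter_upwards [hφD] with p hp
    by_cases hpD : p ∈ D
    · rw [indicator_of_mem hpD, ← ENNReal.ofReal_add (sq_nonneg _) (sq_nonneg _), norm_mul,
        Real.norm_eq_abs, Real.norm_eq_abs]
      refine ENNReal.ofReal_le_ofReal ?_
      nlinarith [sq_abs (u p.1 - u (p.1 + p.2)), sq_abs (φ p.1 - φ (p.1 + p.2)),
        sq_nonneg (|u p.1 - u (p.1 + p.2)| - |φ p.1 - φ (p.1 + p.2)|)]
    · simp [hp hpD]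
  refine ⟨by fun_prop, (hasFiniteIntegral_iff_norm _).2 ((lintegral_mono_ae hbound).trans_lt ?_)⟩
  rw [lintegral_indicator hD, lintegral_add_left (by fun_prop)]
  exact ENNReal.add_lt_top.2
    ⟨hν.setLIntegral_jump_sq_lt_top hu hEu, hν.setLIntegral_jump_sq_lt_top hφ hEφ⟩

end JumpEnergy

lemma tendsto_setIntegral_tail {α E : Type*} [MeasurableSpace α] [NormedAddCommGroup E]
    [MeasurableSpace E] [OpensMeasurableSpace E] {μ : Measure α} {ν : Measure E}
    {H : α × E → ℝ} (hν : ∀ᵐ z ∂ν, z ≠ 0) (hH : Integrable H (μ.prod ν)) :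
    Tendsto (fun ε => ∫ p in {p : α × E | ε ≤ ‖p.2‖}, H p ∂(μ.prod ν)) (𝓝[>] 0)
      (𝓝 (∫ p, H p ∂(μ.prod ν))) := by
  have hT : ∀ ε : ℝ, MeasurableSet {p : α × E | ε ≤ ‖p.2‖} := fun ε =>
    measurableSet_le measurable_const (measurable_norm.comp measurable_snd)
  refine (tendsto_integral_filter_of_dominated_convergence (fun p => ‖H p‖)
    (Eventually.of_forall fun ε => hH.1.indicator (hT ε))
    (Eventually.of_forall fun ε => ae_of_all _ fun p => norm_indicator_le_norm_self _ _)
    hH.norm ?_).congr fun ε => integral_indicator (hT ε)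
  filter_upwards [Measure.quasiMeasurePreserving_snd.ae hν] with p hp
  refine tendsto_const_nhds.congr' ?_
  filter_upwards [eventually_nhdsWithin_of_eventually_nhds
    (eventually_lt_nhds (norm_pos_iff.2 hp))] with ε hε
  exact (indicator_of_mem (show p ∈ {p : α × E | ε ≤ ‖p.2‖} from hε.le) H).symm

section WeakFormulation

variable {n : ℕ} {ν : Measure (Eucl n)} {u φ : Eucl n → ℝ}

lemma IsSymmLevy.setIntegral_tail_jump_mul_jump (hν : IsSymmLevy ν) [SFinite ν]
    (hu : Measurable u) {C : ℝ} (hC : ∀ x, |u x| ≤ C) (hφ : Integrable φ)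
    (hH : Integrable (fun p : Eucl n × Eucl n =>
      (u p.1 - u (p.1 + p.2)) * (φ p.1 - φ (p.1 + p.2))) (volume.prod ν))
    {ε : ℝ} (hε : 0 < ε) :
    ∫ p in {p : Eucl n × Eucl n | ε ≤ ‖p.2‖},
        (u p.1 - u (p.1 + p.2)) * (φ p.1 - φ (p.1 + p.2)) ∂(volume.prod ν)
      = 2 * ∫ x, truncL ν u x ε * φ x := by
  have := hν.isNegInvariant
  set T := {y : Eucl n | ε ≤ ‖y‖}
  set S : Set (Eucl n × Eucl n) := univ ×ˢ T
  have hS : {p : Eucl n × Eucl n | ε ≤ ‖p.2‖} = S := by ext; simp [S, T]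
  set A : Eucl n × Eucl n → ℝ := fun p => (u p.1 - u (p.1 + p.2)) * φ p.1
  have hA : IntegrableOn A S (volume.prod ν) := by
    have : IsFiniteMeasure (ν.restrict T) :=
      isFiniteMeasure_restrict.2 (hν.measure_tail_lt_top hε).ne
    rw [IntegrableOn, ← Measure.prod_restrict, Measure.restrict_univ]
    have hφ₁ := hφ.comp_fst (ν.restrict T)
    refine (hφ₁.norm.const_mul (2 * C)).mono' ((show Measurable fun p : Eucl n × Eucl n =>
      u p.1 - u (p.1 + p.2) by fun_prop).aestronglyMeasurable.mul hφ₁.1) (ae_of_all _ fun p => ?_)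
    rw [norm_mul, Real.norm_eq_abs]
    exact mul_le_mul_of_nonneg_right
      ((abs_sub _ _).trans (by linarith [hC p.1, hC (p.1 + p.2)])) (norm_nonneg _)
  have hswap : ∫ p in S, A (MeasurableEquiv.jumpSwap p) ∂(volume.prod ν)
      = ∫ p in S, A p ∂(volume.prod ν) := by
    have hpre : MeasurableEquiv.jumpSwap ⁻¹' S = S := by ext p; simp [S, T]
    simpa only [hpre] using (measurePreserving_jumpSwap volume ν).setIntegral_preimage_emb
      MeasurableEquiv.jumpSwap.measurableEmbedding A S
  have hAσ : ∀ p, A (MeasurableEquiv.jumpSwap p)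
      = (u p.1 - u (p.1 + p.2)) * (φ p.1 - φ (p.1 + p.2)) - A p := fun p => by
    simp only [A, MeasurableEquiv.jumpSwap_apply, add_neg_cancel_right]
    ring
  have hA_eq : ∫ p in S, A p ∂(volume.prod ν) = ∫ x, truncL ν u x ε * φ x := by
    rw [setIntegral_prod _ hA, Measure.restrict_univ]
    refine integral_congr_ae (ae_of_all _ fun x => ?_)
    exact integral_mul_const (φ x) _
  rw [integral_congr_ae (ae_of_all _ hAσ), integral_sub hH.integrableOn hA] at hswap
  rw [hS, ← hA_eq]
  linarith

lemma tendsto_integral_truncL_mul [SFinite ν] (hu : Measurable u) {M : ℝ}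
    (hM : ∀ x ε, 0 < ε → |truncL ν u x ε| ≤ M) (hφ : Integrable φ) {Ω : Set (Eucl n)}
    (hΩ : MeasurableSet Ω) (hφΩ : ∀ᵐ x, x ∉ Ω → φ x = 0) {f : Eucl n → ℝ}
    (hf : ∀ x ∈ Ω, Tendsto (truncL ν u x) (𝓝[>] 0) (𝓝 (f x))) :
    Tendsto (fun ε => ∫ x, truncL ν u x ε * φ x) (𝓝[>] 0) (𝓝 (∫ x in Ω, f x * φ x)) := by
  rw [← integral_indicator hΩ]
  refine tendsto_integral_filter_of_dominated_convergence (fun x => M * ‖φ x‖)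
    (Eventually.of_forall fun ε => (stronglyMeasurable_truncL hu ε).aestronglyMeasurable.mul hφ.1)
    ?_ (hφ.norm.const_mul M) ?_
  · filter_upwards [self_mem_nhdsWithin] with ε hε
    refine ae_of_all _ fun x => ?_
    rw [norm_mul, Real.norm_eq_abs]
    exact mul_le_mul_of_nonneg_right (hM x ε hε) (norm_nonneg _)
  · filter_upwards [hφΩ] with x hx
    by_cases hxΩ : x ∈ Ω
    · rw [indicator_of_mem hxΩ]
      exact (hf x hxΩ).mul_const _
    · simp [indicator_of_notMem hxΩ, hx hxΩ]

lemma IsSymmLevy.formB_eq_setIntegral (hν : IsSymmLevy ν) (hu : Measurable u) {C M : ℝ}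
    (hC : ∀ x, |u x| ≤ C) (hM : ∀ x ε, 0 < ε → |truncL ν u x ε| ≤ M) (hφ : Integrable φ)
    {Ω : Set (Eucl n)} (hΩ : MeasurableSet Ω) (hφΩ : ∀ᵐ x, x ∉ Ω → φ x = 0)
    (hH : Integrable (fun p : Eucl n × Eucl n =>
      (u p.1 - u (p.1 + p.2)) * (φ p.1 - φ (p.1 + p.2))) (volume.prod ν))
    {f : Eucl n → ℝ} (hf : ∀ x ∈ Ω, Tendsto (truncL ν u x) (𝓝[>] 0) (𝓝 (f x))) :
    formB ν u φ = ∫ x in Ω, f x * φ x := by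
  have := hν.sigmaFinite
  have hlim : ∫ p, (u p.1 - u (p.1 + p.2)) * (φ p.1 - φ (p.1 + p.2)) ∂(volume.prod ν)
      = 2 * ∫ x in Ω, f x * φ x :=
    tendsto_nhds_unique (tendsto_setIntegral_tail hν.ae_ne_zero hH)
      (((tendsto_integral_truncL_mul hu hM hφ hΩ hφΩ hf).const_mul 2).congr'
        (eventually_nhdsWithin_of_forall fun ε hε =>
          (hν.setIntegral_tail_jump_mul_jump hu hC hφ hH hε).symm))
  rw [formB, ← integral_prod _ hH, hlim]
  ring

end WeakFormulation

theorem dirichlet_stmt11_general {n : ℕ} (ν : Measure (Eucl n)) (hν : IsSymmLevy ν)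
    (Ω : Set (Eucl n)) (hΩo : IsOpen Ω)
    (hΩb : Bornology.IsBounded Ω)
    (u : Eucl n → ℝ) (hu : ContDiff ℝ 2 u)
    (hub : ∀ i : ℕ, i ≤ 2 → ∃ C : ℝ, ∀ x, ‖iteratedFDeriv ℝ i u x‖ ≤ C)
    (f : Eucl n → ℝ) (hfL : ∀ x ∈ Ω, HasLAt ν u x (f x)) :
    MemLp f 2 ((volume : Measure (Eucl n)).restrict Ω) ∧
      ∀ φ : Eucl n → ℝ, MemH ν Ω φ → formB ν u φ = ∫ x in Ω, f x * φ x := by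
  obtain ⟨C₀, hC₀⟩ := hub 0 (by norm_num)
  obtain ⟨C₁, hC₁⟩ := hub 1 (by norm_num)
  obtain ⟨C₂, hC₂⟩ := hub 2 le_rfl
  have := hν.sigmaFinite
  have hum : Measurable u := hu.continuous.measurable
  have hbdd : ∀ x, |u x| ≤ C₀ := by simpa using hC₀
  have hlip : ∀ x y, |u x - u y| ≤ C₁ * ‖x - y‖ := by
    simpa using norm_sub_le_of_norm_iteratedFDeriv_one_le (hu.of_le one_le_two) hC₁
  have hsec : ∀ x z, |u (x + z) + u (x - z) - 2 * u x| ≤ 2 * C₂ * ‖z‖ ^ 2 := by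
    simpa using norm_second_difference_le hu hC₂
  have hM := fun x ε (hε : 0 < ε) => abs_truncL_le hν hum hbdd hsec x hε
  have hf : ∀ x ∈ Ω, Tendsto (truncL ν u x) (𝓝[>] 0) (𝓝 (f x)) := fun x hx => (hfL x hx).2
  have hΩ := hΩo.measurableSet
  refine ⟨memLp_of_tendsto_truncL hum hM hΩ hΩb.measure_lt_top hf 2, fun φ hφ => ?_⟩
  have hH := hν.integrable_jump_mul_jump hum hφ.1.1 hΩ hφ.2
    (hν.lintegral_jump_sq_lt_top hΩb.measure_lt_top hbdd hlip) hφ.1.lintegral_jump_sq_lt_top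
  exact hν.formB_eq_setIntegral hum hbdd hM (hφ.integrable hΩb.measure_lt_top) hΩ hφ.2 hH hf

theorem dirichlet_stmt11 {n : ℕ} (ν : Measure (Eucl n)) (hν : IsSymmLevy ν)
    (Ω : Set (Eucl n)) (hΩo : IsOpen Ω) (hΩne : Ω.Nonempty)
    (hΩb : Bornology.IsBounded Ω)
    (u : Eucl n → ℝ) (hu : ContDiff ℝ 2 u)
    (hub : ∀ i : ℕ, i ≤ 2 → ∃ C : ℝ, ∀ x, ‖iteratedFDeriv ℝ i u x‖ ≤ C)
    (f : Eucl n → ℝ) (hfL : ∀ x ∈ Ω, HasLAt ν u x (f x)) :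
    MemLp f 2 ((volume : Measure (Eucl n)).restrict Ω) ∧
      ∀ φ : Eucl n → ℝ, MemH ν Ω φ → formB ν u φ = ∫ x in Ω, f x * φ x :=
  dirichlet_stmt11_general ν hν Ω hΩo hΩb u hu hub f hfL
end

section
/- (Strong maximum principle) Let ν be a symmetric Lévy measure on ℝⁿ with ν(ℝⁿ∖{0}) > 0 and Ω ⊆ ℝⁿ a nonempty bounded open set. If u ∈ C(ℝⁿ) is such that Lu(x) exists for every x ∈ Ω, Lu ≥ 0 in Ω, and u ≥ 0 on ℝⁿ∖Ω, then u ≥ 0 in Ω. -/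
open MeasureTheory Filter Set Topology
open scoped ENNReal Topology Pointwise Classical

/-!
Suppose `u` takes a negative value. Since `u ≥ 0` off the bounded set `Ω`, `u` attains a
negative global minimum, and its level set at the minimum is compact and contained in `Ω`;
let `x₀` be a point of it of maximal norm. At a global minimum the truncated integrals
`∫_{|y| ≥ ε} (u x₀ - u (x₀ + y)) dν` are nonpositive and increase with `ε`, so `Lu x₀ ≥ 0`
forces all of them to vanish: `u (x₀ + y) = u x₀` for `ν`-a.e. `y ≠ 0`, and by symmetry of `ν`
also `u (x₀ - y) = u x₀`. Then `‖x₀ ± y‖ ≤ ‖x₀‖`, which by the parallelogram law forces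
`y = 0`; hence `ν` is concentrated at the origin.
-/

lemma eq_zero_of_norm_add_le_of_norm_sub_le {E : Type*} [NormedAddCommGroup E]
    [InnerProductSpace ℝ E] {x y : E} (h₁ : ‖x + y‖ ≤ ‖x‖) (h₂ : ‖x - y‖ ≤ ‖x‖) : y = 0 := by
  have hpar := parallelogram_law_with_norm ℝ x y
  have : ‖y‖ ^ 2 ≤ 0 := by
    nlinarith [pow_le_pow_left₀ (norm_nonneg _) h₁ 2, pow_le_pow_left₀ (norm_nonneg _) h₂ 2]
  exact norm_eq_zero.1 (by nlinarith [norm_nonneg y])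

section Minimum

variable {E : Type*} [NormedAddCommGroup E] [ProperSpace E] {u : E → ℝ} {Ω : Set E}

lemma exists_forall_le_of_nonneg_off_isBounded (hc : Continuous u) (hΩ : Bornology.IsBounded Ω)
    (hout : ∀ x ∉ Ω, 0 ≤ u x) {x₁ : E} (hx₁ : u x₁ < 0) : ∃ z, u z < 0 ∧ ∀ w, u z ≤ u w := by
  have hx₁Ω : x₁ ∈ closure Ω := subset_closure <| by
    by_contra h
    exact (hout x₁ h).not_gt hx₁
  obtain ⟨z, -, hz⟩ :=
    hΩ.isCompact_closure.exists_isMinOn ⟨x₁, hx₁Ω⟩ hc.continuousOn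
  have hzneg : u z < 0 := (hz hx₁Ω).trans_lt hx₁
  refine ⟨z, hzneg, fun w => ?_⟩
  by_cases hw : w ∈ closure Ω
  · exact hz hw
  · exact hzneg.le.trans (hout w fun h => hw (subset_closure h))

lemma exists_mem_forall_le_of_nonneg_off_isBounded (hc : Continuous u)
    (hΩ : Bornology.IsBounded Ω) (hout : ∀ x ∉ Ω, 0 ≤ u x) {x₁ : E} (hx₁ : u x₁ < 0) :
    ∃ x₀ ∈ Ω, (∀ w, u x₀ ≤ u w) ∧ ∀ w, u w = u x₀ → ‖w‖ ≤ ‖x₀‖ := by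
  obtain ⟨z, hzneg, hz⟩ := exists_forall_le_of_nonneg_off_isBounded hc hΩ hout hx₁
  have hKΩ : u ⁻¹' {u z} ⊆ Ω := fun w hw => by
    by_contra h
    exact (hout w h).not_gt (hw.symm ▸ hzneg)
  have hK : IsCompact (u ⁻¹' {u z}) :=
    Metric.isCompact_of_isClosed_isBounded (isClosed_singleton.preimage hc) (hΩ.subset hKΩ)
  obtain ⟨x₀, hx₀, hmax⟩ := hK.exists_isMaxOn ⟨z, rfl⟩ continuous_norm.continuousOn
  have hx₀z : u x₀ = u z := hx₀
  refine ⟨x₀, hKΩ hx₀, fun w => hx₀z ▸ hz w, fun w hw => hmax (hw.trans hx₀z)⟩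

end Minimum

section Operator

lemma truncL_eq_neg_setIntegral {n : ℕ} (ν : Measure (Eucl n)) (u : Eucl n → ℝ) (x : Eucl n)
    (ε : ℝ) : truncL ν u x ε = -∫ y in {y : Eucl n | ε ≤ ‖y‖}, (u (x + y) - u x) ∂ν := by
  rw [← integral_neg, truncL]
  simp only [neg_sub]

variable {n : ℕ} {ν : Measure (Eucl n)} {u : Eucl n → ℝ} {x₀ : Eucl n}

lemma truncL_mono_of_forall_le (hmin : ∀ w, u x₀ ≤ u w) {ε ε' : ℝ}
    (hint : IntegrableOn (fun y => u x₀ - u (x₀ + y)) {y : Eucl n | ε ≤ ‖y‖} ν)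
    (hεε' : ε ≤ ε') : truncL ν u x₀ ε ≤ truncL ν u x₀ ε' := by
  rw [truncL_eq_neg_setIntegral, truncL_eq_neg_setIntegral, neg_le_neg_iff]
  have hS : MeasurableSet {y : Eucl n | ε ≤ ‖y‖} := measurableSet_le measurable_const
    measurable_norm
  have hsub : {y : Eucl n | ε' ≤ ‖y‖} ⊆ {y | ε ≤ ‖y‖} := fun y hy => hεε'.trans hy
  exact setIntegral_mono_set (hint.neg.congr_fun (fun y _ => neg_sub _ _) hS)
    (Eventually.of_forall fun y => sub_nonneg.2 (hmin _)) hsub.eventuallyLE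

lemma truncL_eq_zero_of_forall_le {l : ℝ} (hL : HasLAt ν u x₀ l) (hl : 0 ≤ l)
    (hmin : ∀ w, u x₀ ≤ u w) {ε : ℝ} (hε : 0 < ε) : truncL ν u x₀ ε = 0 := by
  refine le_antisymm ?_ (hl.trans (le_of_tendsto hL.2 ?_))
  · exact integral_nonpos fun y => sub_nonpos.2 (hmin _)
  · filter_upwards [Ioc_mem_nhdsGT hε] with t ht
    exact truncL_mono_of_forall_le hmin (hL.1 t ht.1) ht.2

lemma ae_eq_of_hasLAt_of_forall_le {l : ℝ} (hL : HasLAt ν u x₀ l) (hl : 0 ≤ l)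
    (hmin : ∀ w, u x₀ ≤ u w) : ∀ᵐ y ∂ν, y ≠ 0 → u (x₀ + y) = u x₀ := by
  have hannulus : ∀ ε : ℝ, 0 < ε → ∀ᵐ y ∂ν, ε ≤ ‖y‖ → u (x₀ + y) = u x₀ := by
    intro ε hε
    have hS : MeasurableSet {y : Eucl n | ε ≤ ‖y‖} := measurableSet_le measurable_const
      measurable_norm
    have hzero := truncL_eq_zero_of_forall_le hL hl hmin hε
    rw [truncL_eq_neg_setIntegral, neg_eq_zero, integral_eq_zero_iff_of_nonneg
      (fun y => sub_nonneg.2 (hmin _))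
      ((hL.1 ε hε).neg.congr_fun (fun y _ => neg_sub _ _) hS), EventuallyEq,
      ae_restrict_iff' hS] at hzero
    filter_upwards [hzero] with y hy hεy
    exact sub_eq_zero.1 (hy hεy)
  filter_upwards [ae_all_iff.2 fun k : ℕ => hannulus (1 / (k + 1)) (by positivity)] with y hy hy0
  obtain ⟨k, hk⟩ := exists_nat_one_div_lt (norm_pos_iff.2 hy0)
  exact hy k hk.le

lemma IsSymmLevy.ae_neg (hν : IsSymmLevy ν) {p : Eucl n → Prop} (h : ∀ᵐ y ∂ν, p y) :
    ∀ᵐ y ∂ν, p (-y) := by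
  rw [ae_iff] at h ⊢
  -- symmetry of `ν` is only available for measurable sets
  refine measure_mono_null (t := -toMeasurable ν {y | ¬p y}) ?_ ?_
  · exact fun y hy => subset_toMeasurable ν _ hy
  · rwa [hν.2.1 _ (measurableSet_toMeasurable _ _), measure_toMeasurable]

end Operator

theorem dirichlet_stmt15_general {n : ℕ} (ν : Measure (Eucl n)) (hν : IsSymmLevy ν)
    (hν0 : 0 < ν ({0}ᶜ : Set (Eucl n)))
    (Ω : Set (Eucl n))
    (hΩb : Bornology.IsBounded Ω)
    (u : Eucl n → ℝ) (hc : Continuous u)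
    (Lu : Eucl n → ℝ) (hL : ∀ x ∈ Ω, HasLAt ν u x (Lu x))
    (hLpos : ∀ x ∈ Ω, 0 ≤ Lu x)
    (hout : ∀ x ∉ Ω, 0 ≤ u x) :
    ∀ x ∈ Ω, 0 ≤ u x := by
  intro x _
  by_contra! hneg
  obtain ⟨x₀, hx₀, hmin, hmax⟩ :=
    exists_mem_forall_le_of_nonneg_off_isBounded hc hΩb hout hneg
  have hplus := ae_eq_of_hasLAt_of_forall_le (hL x₀ hx₀) (hLpos x₀ hx₀) hmin
  have hminus := hν.ae_neg hplus
  have hzero : ∀ᵐ y ∂ν, y = 0 := by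
    filter_upwards [hplus, hminus] with y hy₁ hy₂
    by_contra hy
    refine hy (eq_zero_of_norm_add_le_of_norm_sub_le (hmax _ (hy₁ hy)) (hmax _ ?_))
    simpa [sub_eq_add_neg] using hy₂ (neg_ne_zero.2 hy)
  exact hν0.ne' (ae_iff.1 hzero)

theorem dirichlet_stmt15 {n : ℕ} (ν : Measure (Eucl n)) (hν : IsSymmLevy ν)
    (hν0 : 0 < ν ({0}ᶜ : Set (Eucl n)))
    (Ω : Set (Eucl n)) (hΩo : IsOpen Ω) (hΩne : Ω.Nonempty)
    (hΩb : Bornology.IsBounded Ω)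
    (u : Eucl n → ℝ) (hc : Continuous u)
    (Lu : Eucl n → ℝ) (hL : ∀ x ∈ Ω, HasLAt ν u x (Lu x))
    (hLpos : ∀ x ∈ Ω, 0 ≤ Lu x)
    (hout : ∀ x ∉ Ω, 0 ≤ u x) :
    ∀ x ∈ Ω, 0 ≤ u x :=
  dirichlet_stmt15_general ν hν hν0 Ω hΩb u hc Lu hL hLpos hout
end

section
/- Let ν be a symmetric Lévy measure on ℝⁿ with ν(ℝⁿ∖{0}) > 0 and Ω ⊆ ℝⁿ a nonempty bounded open set. If u ∈ C(ℝⁿ) satisfies u ≥ 0 on ℝⁿ∖Ω, u has a negative global minimum at a point x ∈ Ω, and Lu(y) exists for every y ∈ Ω, then there exists x′ ∈ Ω such that u(x′) = u(x) and Lu(x′) < 0. -/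
open MeasureTheory Filter Set Topology
open scoped ENNReal Topology Pointwise Classical

/-!
The minimisers of `u` form a compact subset of `Ω`; let `x₀` be one of maximal norm. At a global
minimum every truncated integral is `≤ 0`, so `Lu x₀ ≤ 0`. If `Lu x₀ = 0`, the nonnegative function
`y ↦ u (x₀ + y) - u x₀` has vanishing integral over every shell `{ε ≤ ‖y‖}`, so it vanishes
`ν`-a.e. off the origin. Since `ν` is symmetric and charges `ℝⁿ ∖ {0}`, some `y ≠ 0` makes both
`x₀ + y` and `x₀ - y` minimisers, and by strict convexity of the norm their midpoint `x₀` is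
strictly shorter than the longer of them, contradicting the choice of `x₀`.
-/

theorem eq_zero_of_norm_add_le_of_norm_sub_le_s17 {E : Type*} [NormedAddCommGroup E]
    [NormedSpace ℝ E] [StrictConvexSpace ℝ E] {x y : E} (hadd : ‖x + y‖ ≤ ‖x‖)
    (hsub : ‖x - y‖ ≤ ‖x‖) : y = 0 := by
  by_contra hy
  have hne : x + y ≠ x - y := by
    rw [← sub_ne_zero, show x + y - (x - y) = (2 : ℝ) • y by module]
    exact smul_ne_zero two_ne_zero hy
  have hmid := norm_combo_lt_of_ne hadd hsub hne (by norm_num : (0 : ℝ) < 1 / 2)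
    (by norm_num : (0 : ℝ) < 1 / 2) (by norm_num)
  rw [show (1 / 2 : ℝ) • (x + y) + (1 / 2 : ℝ) • (x - y) = x by module] at hmid
  exact hmid.false

section PrincipalValue

variable {E : Type*} [NormedAddCommGroup E] [MeasurableSpace E] {ν : Measure E} {g : E → ℝ}

theorem setIntegral_norm_ge_eq_zero_of_tendsto (hg : 0 ≤ g)
    (hint : ∀ ε, 0 < ε → IntegrableOn g {y | ε ≤ ‖y‖} ν)
    (hlim : Tendsto (fun ε => ∫ y in {y | ε ≤ ‖y‖}, g y ∂ν) (𝓝[>] 0) (𝓝 0))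
    {δ : ℝ} (hδ : 0 < δ) : ∫ y in {y | δ ≤ ‖y‖}, g y ∂ν = 0 := by
  refine le_antisymm (ge_of_tendsto hlim ?_) (integral_nonneg hg)
  filter_upwards [Ioo_mem_nhdsGT hδ] with ε hε
  exact setIntegral_mono_set (hint ε hε.1) (ae_of_all _ fun y => hg y)
    (Eventually.of_forall fun y (hy : δ ≤ ‖y‖) => hε.2.le.trans hy)

theorem ae_eq_zero_of_tendsto_setIntegral_norm_ge [OpensMeasurableSpace E] (hg : 0 ≤ g)
    (hint : ∀ ε, 0 < ε → IntegrableOn g {y | ε ≤ ‖y‖} ν)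
    (hlim : Tendsto (fun ε => ∫ y in {y | ε ≤ ‖y‖}, g y ∂ν) (𝓝[>] 0) (𝓝 0)) :
    ∀ᵐ y ∂ν, y ≠ 0 → g y = 0 := by
  have hshell (k : ℕ) : ∀ᵐ y ∂ν, 1 / (k + 1 : ℝ) ≤ ‖y‖ → g y = 0 := by
    have hδ : 0 < 1 / (k + 1 : ℝ) := by positivity
    refine (ae_restrict_iff' (measurableSet_le measurable_const measurable_norm)).1 ?_
    exact (setIntegral_eq_zero_iff_of_nonneg_ae (ae_of_all _ hg) (hint _ hδ)).1
      (setIntegral_norm_ge_eq_zero_of_tendsto hg hint hlim hδ)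
  filter_upwards [ae_all_iff.2 hshell] with y hy hy0
  obtain ⟨k, hk⟩ := exists_nat_one_div_lt (norm_pos_iff.2 hy0)
  exact hy k hk.le

end PrincipalValue

theorem exists_ne_zero_and_neg_of_ae {G : Type*} [AddGroup G] [MeasurableSpace G]
    [MeasurableNeg G] [MeasurableSingletonClass G] {ν : Measure G} [ν.IsNegInvariant]
    (hν0 : ν {0}ᶜ ≠ 0) {p : G → Prop} (h : ∀ᵐ y ∂ν, y ≠ 0 → p y) :
    ∃ y ≠ 0, p y ∧ p (-y) := by
  have h' := (Measure.measurePreserving_neg ν).quasiMeasurePreserving.ae h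
  refine Measure.exists_mem_of_measure_ne_zero_of_ae hν0
    ((ae_restrict_iff' (measurableSet_singleton 0).compl).2 ?_)
  filter_upwards [h, h'] with y hy hy' hy0 using ⟨hy hy0, hy' (neg_ne_zero.2 hy0)⟩

theorem IsSymmLevy.isNegInvariant_s17 {n : ℕ} {ν : Measure (Eucl n)} (hν : IsSymmLevy ν) :
    ν.IsNegInvariant :=
  ⟨Measure.ext fun A hA => by rw [Measure.neg_apply, hν.2.1 A hA]⟩

namespace HasLAt

variable {n : ℕ} {ν : Measure (Eucl n)} {u : Eucl n → ℝ} {x : Eucl n} {l : ℝ}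

theorem nonpos_of_forall_le (h : HasLAt ν u x l) (hmin : ∀ y, u x ≤ u y) : l ≤ 0 :=
  le_of_tendsto h.2 (Eventually.of_forall fun _ => integral_nonpos fun _ => sub_nonpos.2 (hmin _))

theorem ae_eq_of_forall_le (h : HasLAt ν u x l) (hmin : ∀ y, u x ≤ u y) (hl : 0 ≤ l) :
    ∀ᵐ y ∂ν, y ≠ 0 → u (x + y) = u x := by
  have hl0 : l = 0 := le_antisymm (h.nonpos_of_forall_le hmin) hl
  have hflat := ae_eq_zero_of_tendsto_setIntegral_norm_ge (g := fun y => u (x + y) - u x)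
    (fun y => sub_nonneg.2 (hmin _))
    (fun ε hε => by simpa only [Pi.neg_def, neg_sub] using (h.1 ε hε).neg)
    (by simpa only [truncL, ← integral_neg, neg_sub, hl0, neg_zero] using h.2.neg)
  filter_upwards [hflat] with y hy hy0 using sub_eq_zero.1 (hy hy0)

end HasLAt

theorem dirichlet_stmt17_general {n : ℕ} (ν : Measure (Eucl n)) (hν : IsSymmLevy ν)
    (hν0 : 0 < ν ({0}ᶜ : Set (Eucl n)))
    (Ω : Set (Eucl n))
    (hΩb : Bornology.IsBounded Ω)
    (u : Eucl n → ℝ) (hc : Continuous u)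
    (hout : ∀ y ∉ Ω, 0 ≤ u y)
    (x : Eucl n) (hneg : u x < 0)
    (hmin : ∀ y, u x ≤ u y)
    (Lu : Eucl n → ℝ) (hL : ∀ y ∈ Ω, HasLAt ν u y (Lu y)) :
    ∃ x' ∈ Ω, u x' = u x ∧ Lu x' < 0 := by
  have hMΩ : u ⁻¹' {u x} ⊆ Ω := fun y (hy : u y = u x) =>
    by_contra fun hyΩ => (hout y hyΩ).not_gt (hy ▸ hneg)
  have hMcpt : IsCompact (u ⁻¹' {u x}) :=
    Metric.isCompact_of_isClosed_isBounded (isClosed_singleton.preimage hc) (hΩb.subset hMΩ)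
  obtain ⟨x₀, hx₀ : u x₀ = u x, hfar⟩ :=
    hMcpt.exists_isMaxOn ⟨x, rfl⟩ continuous_norm.continuousOn
  refine ⟨x₀, hMΩ hx₀, hx₀, ?_⟩
  by_contra! hLu
  have hflat := (hL x₀ (hMΩ hx₀)).ae_eq_of_forall_le (hx₀ ▸ hmin) hLu
  have := hν.isNegInvariant_s17
  obtain ⟨y, hy0, hyadd, hysub⟩ := exists_ne_zero_and_neg_of_ae hν0.ne' hflat
  refine hy0 (eq_zero_of_norm_add_le_of_norm_sub_le_s17 (hfar ?_) (hfar ?_))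
  · exact hyadd.trans hx₀
  · exact (sub_eq_add_neg x₀ y ▸ hysub).trans hx₀

theorem dirichlet_stmt17 {n : ℕ} (ν : Measure (Eucl n)) (hν : IsSymmLevy ν)
    (hν0 : 0 < ν ({0}ᶜ : Set (Eucl n)))
    (Ω : Set (Eucl n)) (hΩo : IsOpen Ω) (hΩne : Ω.Nonempty)
    (hΩb : Bornology.IsBounded Ω)
    (u : Eucl n → ℝ) (hc : Continuous u)
    (hout : ∀ y ∉ Ω, 0 ≤ u y)
    (x : Eucl n) (hx : x ∈ Ω) (hneg : u x < 0)
    (hmin : ∀ y, u x ≤ u y)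
    (Lu : Eucl n → ℝ) (hL : ∀ y ∈ Ω, HasLAt ν u y (Lu y)) :
    ∃ x' ∈ Ω, u x' = u x ∧ Lu x' < 0 :=
  dirichlet_stmt17_general ν hν hν0 Ω hΩb u hc hout x hneg hmin Lu hL
end
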